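/- arXiv:1901.07668 — 2 statements merged into one kernel-verified Lean document; each statement's English description precedes it below -/
import Mathlib

section
/- Define Γ(C,x,y) = Σ_{F face of C} (-1)^{dim F} [A(F,C)](x) [F*](y). If y ∈ −relint(C*) or if x ∈ C, then Γ(C,x,y) = (-1)^{dim F₀} [C](x) [−relint C*](y), where F₀ is the minimal face of C. -/
open scoped RealInnerProductSpace
open scoped Classical

noncomputable section

variable {V : Type*} [NormedAddCommGroup V] [InnerProductSpace ℝ V] [FiniteDimensional ℝ V]

/-- A polyhedral cone: a finite intersection of closed halfspaces through the origin. -/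
def IsPolyCone (C : Set V) : Prop :=
  ∃ s : Finset V, C = ⋂ y ∈ s, {v : V | 0 ≤ ⟪v, y⟫}

/-- `F` is a face of the cone `C`: `F = C ∩ H_y` for some `y` (possibly `0`) with `C ⊆ H_y⁺`. -/
def IsFaceOf (F C : Set V) : Prop :=
  ∃ y : V, C ⊆ {v : V | 0 ≤ ⟪v, y⟫} ∧ F = C ∩ {v : V | ⟪v, y⟫ = 0}

/-- Dimension of a set: the dimension of its linear span. -/
def sdim (S : Set V) : ℕ := Module.finrank ℝ (Submodule.span ℝ S)

/-- Dual cone. -/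
def dualCone (C : Set V) : Set V := {v : V | ∀ c ∈ C, 0 ≤ ⟪v, c⟫}

/-- Angle cone `A(F, C) = { a • (x - z) : a > 0, x ∈ C, z ∈ relint F }`. -/
def angleCone (F C : Set V) : Set V :=
  {w : V | ∃ a : ℝ, 0 < a ∧ ∃ x ∈ C, ∃ z ∈ intrinsicInterior ℝ F, w = a • (x - z)}

/-- Real-valued indicator function of a set. -/
def ind (S : Set V) : V → ℝ := S.indicator 1

/-- The `Γ` function: `Γ(C, x, y) = Σ_{F face of C} (-1)^(dim F) [A(F,C)](x) [F*](y)`. -/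
def Γ (C : Set V) (x y : V) : ℝ :=
  ∑ᶠ F ∈ {F : Set V | IsFaceOf F C},
    (-1 : ℝ) ^ sdim F * ind (angleCone F C) x * ind (dualCone F) y

/-- `F₀` is the minimal face of `C`. -/
def IsMinimalFace (F₀ C : Set V) : Prop :=
  IsFaceOf F₀ C ∧ ∀ F : Set V, IsFaceOf F C → F₀ ⊆ F

/-- A polyhedron: a finite intersection of translates of halfspaces. -/
def IsPolyhedron (P : Set V) : Prop :=
  ∃ s : Finset (V × ℝ), P = ⋂ p ∈ s, {v : V | p.2 ≤ ⟪v, p.1⟫}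

/-!
Write `C = polyCone s`; its minimal face is the lineality space `L = perpSet s`. If
`-y ∈ relint C*`, then `y ∈ F*` only for `F = L`, whose angle cone is `C`. If `x ∈ C`, then `x`
lies in every angle cone, so `Γ` is the signed count of the faces in the halfspace `⟪·, y⟫ ≥ 0`,
and this count vanishes unless `-y ∈ relint C*`.

The vanishing rests on two Euler relations, proved together by induction on `dim C - dim L`: the
signed count of all faces is `0` when `C ≠ L`, and so is the signed count of the faces `F` in
`g ≥ 0` with `F ∩ {g = 0} = L` when `g` is positive somewhere on `C`. Faces in `g ≥ 0`, sorted by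
their trace `H` on `g = 0`, are counted by the tangent cones at `H`, whose dimension modulo their
lineality space is smaller; this reduces the second relation to the first one for
`C ∩ {g ≥ 0}`. For the first relation, a generic linear form `l` attributes each face `F ≠ L` to
the ray of `F` on which `l / ⟪·, ∑ s⟫` is minimal. The tangent cones at the rays then contribute
nothing, except at the ray maximizing this ratio on `C`, which contributes `-(-1) ^ dim L`.
-/

open Filter Topology

variable {E : Type*} [NormedAddCommGroup E] [InnerProductSpace ℝ E]

section PolyCone

def polyCone (s : Finset E) : Set E := {v | ∀ t ∈ s, 0 ≤ ⟪v, t⟫}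

def perpSet (T : Finset E) : Set E := {v | ∀ t ∈ T, ⟪v, t⟫ = 0}

def halfspace (g : E) : Set E := {v | 0 ≤ ⟪v, g⟫}

def hyperplane (g : E) : Set E := {v | ⟪v, g⟫ = 0}

def coneFace (s T : Finset E) : Set E := polyCone s ∩ perpSet T

def activeSet (s : Finset E) (S : Set E) : Finset E := s.filter fun t => ∀ v ∈ S, ⟪v, t⟫ = 0

def faces (s : Finset E) : Finset (Set E) := s.powerset.image (coneFace s)

variable {s T T' : Finset E} {S F H : Set E} {u v w z g : E}

lemma zero_mem_polyCone (s : Finset E) : (0 : E) ∈ polyCone s := fun t _ => by simp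

lemma add_mem_polyCone (hv : v ∈ polyCone s) (hw : w ∈ polyCone s) : v + w ∈ polyCone s :=
  fun t ht => by rw [inner_add_left]; exact add_nonneg (hv t ht) (hw t ht)

lemma smul_mem_polyCone {a : ℝ} (ha : 0 ≤ a) (hv : v ∈ polyCone s) : a • v ∈ polyCone s :=
  fun t ht => by rw [real_inner_smul_left]; exact mul_nonneg ha (hv t ht)

lemma polyCone_anti (h : T ⊆ s) : polyCone s ⊆ polyCone T := fun _ hv t ht => hv t (h ht)

lemma polyCone_insert (g : E) (s : Finset E) :
    polyCone (insert g s) = polyCone s ∩ halfspace g := by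
  ext v
  simp [polyCone, halfspace, and_comm]

def perpSub (T : Finset E) : Submodule ℝ E where
  carrier := perpSet T
  add_mem' hv hw t ht := by rw [inner_add_left, hv t ht, hw t ht, add_zero]
  zero_mem' t _ := by simp
  smul_mem' a _ hv t ht := by rw [real_inner_smul_left, hv t ht, mul_zero]

lemma coe_perpSub (T : Finset E) : (perpSub T : Set E) = perpSet T := rfl

lemma neg_mem_perpSet (hv : v ∈ perpSet T) : -v ∈ perpSet T := (perpSub T).neg_mem hv

lemma perpSet_anti (h : T ⊆ T') : perpSet T' ⊆ perpSet T := fun _ hv t ht => hv t (h ht)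

lemma perpSet_subset_polyCone : perpSet T ⊆ polyCone T := fun _ hv t ht => (hv t ht).ge

lemma perpSub_le_span (s : Finset E) : perpSub s ≤ Submodule.span ℝ (polyCone s) :=
  fun _ hv => Submodule.subset_span (perpSet_subset_polyCone hv)

lemma perpSet_union : perpSet (T ∪ T') = perpSet T ∩ perpSet T' := by
  ext v
  simp only [perpSet, Finset.mem_union, Set.mem_inter_iff, Set.mem_ofPred_eq]
  exact ⟨fun h => ⟨fun t ht => h t (.inl ht), fun t ht => h t (.inr ht)⟩,
    fun h t ht => ht.elim (h.1 t) (h.2 t)⟩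

lemma perpSet_insert (h : perpSet s ⊆ hyperplane g) : perpSet (insert g s) = perpSet s := by
  ext v
  simp only [perpSet, Finset.mem_insert, Set.mem_ofPred_eq]
  refine ⟨fun hv t ht => hv t (.inr ht), fun hv t ht => ?_⟩
  rcases ht with rfl | ht
  exacts [h hv, hv t ht]

lemma mem_perpSet_of_neg_mem (h₁ : v ∈ polyCone s) (h₂ : -v ∈ polyCone s) : v ∈ perpSet s :=
  fun t ht => le_antisymm (by simpa [inner_neg_left] using h₂ t ht) (h₁ t ht)

lemma perpSet_subset_hyperplane_of_inner_nonpos (h : ∀ v ∈ polyCone s, ⟪v, g⟫ ≤ 0) :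
    perpSet s ⊆ hyperplane g := fun _ hm =>
  le_antisymm (h _ (perpSet_subset_polyCone hm))
    (by simpa [inner_neg_left] using h _ (perpSet_subset_polyCone (neg_mem_perpSet hm)))

lemma mem_coneFace : v ∈ coneFace s T ↔ v ∈ polyCone s ∧ v ∈ perpSet T := Iff.rfl

lemma zero_mem_coneFace (s T : Finset E) : (0 : E) ∈ coneFace s T :=
  ⟨zero_mem_polyCone s, (perpSub T).zero_mem⟩

lemma add_mem_coneFace (hv : v ∈ coneFace s T) (hw : w ∈ coneFace s T) : v + w ∈ coneFace s T :=
  ⟨add_mem_polyCone hv.1 hw.1, (perpSub T).add_mem hv.2 hw.2⟩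

lemma smul_mem_coneFace {a : ℝ} (ha : 0 ≤ a) (hv : v ∈ coneFace s T) : a • v ∈ coneFace s T :=
  ⟨smul_mem_polyCone ha hv.1, (perpSub T).smul_mem a hv.2⟩

lemma coneFace_empty (s : Finset E) : coneFace s ∅ = polyCone s := by
  simp [coneFace, perpSet]

lemma coneFace_self (s : Finset E) : coneFace s s = perpSet s :=
  Set.inter_eq_right.2 perpSet_subset_polyCone

lemma activeSet_subset (s : Finset E) (S : Set E) : activeSet s S ⊆ s := Finset.filter_subset _ _

lemma mem_activeSet : u ∈ activeSet s S ↔ u ∈ s ∧ ∀ v ∈ S, ⟪v, u⟫ = 0 := Finset.mem_filter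

lemma activeSet_anti {S' : Set E} (h : S ⊆ S') : activeSet s S' ⊆ activeSet s S :=
  fun _ ht => mem_activeSet.2 ⟨(mem_activeSet.1 ht).1, fun v hv => (mem_activeSet.1 ht).2 v (h hv)⟩

lemma subset_perpSet_activeSet : S ⊆ perpSet (activeSet s S) :=
  fun _ hv _ ht => (mem_activeSet.1 ht).2 _ hv

lemma activeSet_perpSet (s : Finset E) : activeSet s (perpSet s) = s :=
  Finset.filter_true_of_mem fun _ ht _ hv => hv _ ht

lemma exists_add_smul_mem_polyCone (hz : z ∈ polyCone s) (hpos : ∀ t ∈ s, t ∉ T → 0 < ⟪z, t⟫)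
    (hv : v ∈ polyCone T) : ∃ ε : ℝ, 0 < ε ∧ z + ε • v ∈ polyCone s := by
  have hev : ∀ᶠ ε in 𝓝[>] (0 : ℝ), z + ε • v ∈ polyCone s := by
    refine (eventually_all_finset s).2 fun t ht => ?_
    by_cases htT : t ∈ T
    · filter_upwards [self_mem_nhdsWithin] with ε hε
      rw [inner_add_left, real_inner_smul_left]
      exact add_nonneg (hz t ht) (mul_nonneg (le_of_lt hε) (hv t htT))
    · have hlim : Tendsto (fun ε : ℝ => ⟪z + ε • v, t⟫) (𝓝[>] 0) (𝓝 ⟪z, t⟫) := by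
        refine (Continuous.tendsto' (by fun_prop) 0 _ (by simp)).mono_left nhdsWithin_le_nhds
      exact (hlim.eventually_const_lt (hpos t ht htT)).mono fun _ h => h.le
  obtain ⟨ε, hε, hεpos⟩ := (hev.and self_mem_nhdsWithin).exists
  exact ⟨ε, hεpos, hε⟩

lemma exists_add_smul_mem_coneFace (hz : z ∈ coneFace s T) (hpos : ∀ t ∈ s, t ∉ T → 0 < ⟪z, t⟫)
    (hv : v ∈ polyCone T) (hT' : T' ⊆ T) (hvT' : v ∈ perpSet T') :
    ∃ ε : ℝ, 0 < ε ∧ z + ε • v ∈ coneFace s T' := by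
  obtain ⟨ε, hε, hmem⟩ := exists_add_smul_mem_polyCone hz.1 hpos hv
  exact ⟨ε, hε, hmem, (perpSub T').add_mem (perpSet_anti hT' hz.2) ((perpSub T').smul_mem ε hvT')⟩

lemma exists_relint_point (hS : S ⊆ polyCone s) (h0 : (0 : E) ∈ S)
    (hadd : ∀ v ∈ S, ∀ w ∈ S, v + w ∈ S) :
    ∃ z ∈ S, ∀ t ∈ s, t ∉ activeSet s S → 0 < ⟪z, t⟫ := by
  suffices ∀ U : Finset E, U ⊆ s → (∀ t ∈ U, t ∉ activeSet s S) →
      ∃ z ∈ S, ∀ t ∈ U, 0 < ⟪z, t⟫ by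
    obtain ⟨z, hz, hpos⟩ := this _ (Finset.filter_subset (· ∉ activeSet s S) s) (by simp)
    exact ⟨z, hz, fun t ht htS => hpos t (by simp [ht, htS])⟩
  intro U
  induction U using Finset.induction_on with
  | empty => exact fun _ _ => ⟨0, h0, by simp⟩
  | insert t U _ ih =>
    intro hU hnot
    obtain ⟨z, hz, hzU⟩ := ih ((Finset.subset_insert t U).trans hU)
      fun t' ht' => hnot t' (Finset.mem_insert_of_mem ht')
    have hts := hU (Finset.mem_insert_self t U)
    obtain ⟨w, hw, hwt⟩ : ∃ w ∈ S, ⟪w, t⟫ ≠ 0 := by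
      simpa [mem_activeSet, hts] using hnot t (Finset.mem_insert_self t U)
    refine ⟨z + w, hadd z hz w hw, fun t' ht' => ?_⟩
    rw [inner_add_left]
    rcases Finset.mem_insert.1 ht' with rfl | ht'
    · exact add_pos_of_nonneg_of_pos (hS hz t' hts) ((hS hw t' hts).lt_of_ne' hwt)
    · exact add_pos_of_pos_of_nonneg (hzU t' ht') (hS hw t' (hU (Finset.mem_insert_of_mem ht')))

lemma coneFace_inter_hyperplane (hT : T ⊆ s) (hg : coneFace s T ⊆ halfspace g) :
    coneFace s T ∩ hyperplane g = coneFace s (activeSet s (coneFace s T ∩ hyperplane g)) := by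
  set S := coneFace s T ∩ hyperplane g
  have hS : S ⊆ polyCone s := fun _ hv => hv.1.1
  obtain ⟨z, hzS, hzpos⟩ := exists_relint_point hS ⟨zero_mem_coneFace s T, by simp [hyperplane]⟩
    fun v hv w hw => ⟨add_mem_coneFace hv.1 hw.1, by
      simp only [hyperplane, Set.mem_ofPred_eq, inner_add_left] at hv hw ⊢
      rw [hv.2, hw.2, add_zero]⟩
  have hTS : T ⊆ activeSet s S :=
    fun t ht => mem_activeSet.2 ⟨hT ht, fun v hv => hv.1.2 t ht⟩
  refine subset_antisymm (fun v hv => ⟨hS hv, subset_perpSet_activeSet hv⟩) fun v hv => ?_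
  have hvT : v ∈ coneFace s T := ⟨hv.1, perpSet_anti hTS hv.2⟩
  obtain ⟨ε, hε, hmem⟩ := exists_add_smul_mem_coneFace ⟨hS hzS, subset_perpSet_activeSet hzS⟩
    hzpos (perpSet_subset_polyCone (neg_mem_perpSet hv.2)) hTS (neg_mem_perpSet hvT.2)
  have h₁ : 0 ≤ ⟪z + ε • -v, g⟫ := hg hmem
  have h₂ : 0 ≤ ⟪v, g⟫ := hg hvT
  have hzg : ⟪z, g⟫ = 0 := hzS.2
  rw [inner_add_left, real_inner_smul_left, inner_neg_left, hzg] at h₁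
  exact ⟨hvT, le_antisymm (by nlinarith) h₂⟩

end PolyCone

section Faces

variable {s T : Finset E} {F F' H : Set E} {v w g : E}

lemma IsFaceOf.subset {C : Set E} (hF : IsFaceOf F C) : F ⊆ C := by
  obtain ⟨y, -, rfl⟩ := hF
  exact Set.inter_subset_left

lemma isFaceOf_coneFace (hT : T ⊆ s) : IsFaceOf (coneFace s T) (polyCone s) := by
  refine ⟨∑ t ∈ T, t, fun v hv => ?_, ?_⟩
  · simp only [Set.mem_ofPred_eq, inner_sum]
    exact Finset.sum_nonneg fun t ht => hv t (hT ht)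
  · ext v
    simp only [coneFace, perpSet, Set.mem_inter_iff, Set.mem_ofPred_eq, inner_sum,
      and_congr_right_iff]
    exact fun hv => (Finset.sum_eq_zero_iff_of_nonneg fun t ht => hv t (hT ht)).symm

lemma IsFaceOf.eq_coneFace (hF : IsFaceOf F (polyCone s)) : F = coneFace s (activeSet s F) := by
  obtain ⟨y, hy, rfl⟩ := hF
  rw [← coneFace_empty] at hy ⊢
  exact coneFace_inter_hyperplane (Finset.empty_subset s) hy

lemma isFaceOf_iff_mem_faces : IsFaceOf F (polyCone s) ↔ F ∈ faces s := by
  refine ⟨fun hF => Finset.mem_image.2 ⟨activeSet s F,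
    Finset.mem_powerset.2 (activeSet_subset s F), hF.eq_coneFace.symm⟩, fun hF => ?_⟩
  obtain ⟨T, hT, rfl⟩ := Finset.mem_image.1 hF
  exact isFaceOf_coneFace (Finset.mem_powerset.1 hT)

lemma isFaceOf_polyCone_self (s : Finset E) : IsFaceOf (polyCone s) (polyCone s) :=
  coneFace_empty s ▸ isFaceOf_coneFace (Finset.empty_subset s)

lemma isFaceOf_perpSet (s : Finset E) : IsFaceOf (perpSet s) (polyCone s) :=
  coneFace_self s ▸ isFaceOf_coneFace subset_rfl

namespace IsFaceOf

variable (hF : IsFaceOf F (polyCone s))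
include hF

lemma zero_mem : (0 : E) ∈ F := hF.eq_coneFace ▸ zero_mem_coneFace _ _

lemma add_mem (hv : v ∈ F) (hw : w ∈ F) : v + w ∈ F := by
  rw [hF.eq_coneFace] at hv hw ⊢
  exact add_mem_coneFace hv hw

lemma smul_mem {a : ℝ} (ha : 0 ≤ a) (hv : v ∈ F) : a • v ∈ F := by
  rw [hF.eq_coneFace] at hv ⊢
  exact smul_mem_coneFace ha hv

lemma exists_relint_point : ∃ z ∈ F, ∀ t ∈ s, t ∉ activeSet s F → 0 < ⟪z, t⟫ :=
  _root_.exists_relint_point hF.subset hF.zero_mem fun _ hv _ hw => hF.add_mem hv hw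

lemma inter_hyperplane (hg : F ⊆ halfspace g) : IsFaceOf (F ∩ hyperplane g) (polyCone s) := by
  rw [hF.eq_coneFace] at hg ⊢
  rw [coneFace_inter_hyperplane (activeSet_subset s F) hg]
  exact isFaceOf_coneFace (activeSet_subset _ _)

lemma perpSet_subset : perpSet s ⊆ F := by
  rw [hF.eq_coneFace]
  exact fun v hv => ⟨perpSet_subset_polyCone hv, perpSet_anti (activeSet_subset s F) hv⟩

lemma add_perpSet_mem (hv : v ∈ F) (hw : w ∈ perpSet s) : v + w ∈ F :=
  hF.add_mem hv (hF.perpSet_subset hw)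

lemma inter (hF' : IsFaceOf F' (polyCone s)) : IsFaceOf (F ∩ F') (polyCone s) := by
  have h : F ∩ F' = coneFace s (activeSet s F ∪ activeSet s F') := by
    ext v
    rw [mem_coneFace, perpSet_union]
    refine ⟨fun hv => ⟨hF.subset hv.1, subset_perpSet_activeSet hv.1,
      subset_perpSet_activeSet hv.2⟩, fun ⟨hv, hA, hA'⟩ => ⟨?_, ?_⟩⟩
    · rw [hF.eq_coneFace]; exact ⟨hv, hA⟩
    · rw [hF'.eq_coneFace]; exact ⟨hv, hA'⟩
  rw [h]
  exact isFaceOf_coneFace (Finset.union_subset (activeSet_subset s F) (activeSet_subset s F'))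

lemma span_eq : Submodule.span ℝ F = perpSub (activeSet s F) := by
  refine le_antisymm (Submodule.span_le.2 subset_perpSet_activeSet) fun v hv => ?_
  obtain ⟨z, hzF, hzpos⟩ := hF.exists_relint_point
  have hz : z ∈ coneFace s (activeSet s F) := hF.eq_coneFace ▸ hzF
  have hv' : v ∈ perpSet (activeSet s F) := hv
  obtain ⟨ε₁, hε₁, h₁⟩ := exists_add_smul_mem_coneFace hz hzpos (perpSet_subset_polyCone hv')
    subset_rfl hv'
  obtain ⟨ε₂, hε₂, h₂⟩ := exists_add_smul_mem_coneFace hz hzpos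
    (perpSet_subset_polyCone (neg_mem_perpSet hv')) subset_rfl (neg_mem_perpSet hv')
  rw [← hF.eq_coneFace] at h₁ h₂
  have hrepr : v = (ε₁ + ε₂)⁻¹ • ((z + ε₁ • v) - (z + ε₂ • -v)) := by
    match_scalars <;> field_simp <;> ring
  rw [hrepr]
  exact Submodule.smul_mem _ _ (Submodule.sub_mem _ (Submodule.subset_span h₁)
    (Submodule.subset_span h₂))

lemma sdim_eq : sdim F = Module.finrank ℝ (perpSub (activeSet s F)) := by
  rw [sdim, hF.span_eq]

end IsFaceOf

lemma sdim_perpSet (T : Finset E) : sdim (perpSet T) = Module.finrank ℝ (perpSub T) := by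
  rw [sdim, ← coe_perpSub, Submodule.span_eq]

lemma sdim_lt_sdim_of_ssubset [FiniteDimensional ℝ E] (hF : IsFaceOf F (polyCone s))
    (hF' : IsFaceOf F' (polyCone s)) (h : F' ⊂ F) : sdim F' < sdim F := by
  refine Submodule.finrank_lt_finrank_of_lt (lt_of_le_of_ne (Submodule.span_mono h.1) fun heq => ?_)
  refine h.2 fun f hf => ?_
  have hf' : f ∈ Submodule.span ℝ F' := heq ▸ Submodule.subset_span hf
  rw [hF'.span_eq] at hf'
  rw [hF'.eq_coneFace]
  exact ⟨hF.subset hf, hf'⟩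

end Faces

section Tangent

variable {s : Finset E} {H F F' : Set E} {z v g : E}

lemma IsFaceOf.perpSet_activeSet_subset_hyperplane (hH : IsFaceOf H (polyCone s))
    (hHg : H ⊆ hyperplane g) : perpSet (activeSet s H) ⊆ hyperplane g := by
  have hspan : Submodule.span ℝ H ≤ (ℝ ∙ g)ᗮ := Submodule.span_le.2 fun v hv => by
    rw [SetLike.mem_coe, Submodule.mem_orthogonal_singleton_iff_inner_right, real_inner_comm]
    exact hHg hv
  intro v hv
  have hv' : v ∈ (ℝ ∙ g)ᗮ := hspan (hH.span_eq ▸ hv)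
  rwa [Submodule.mem_orthogonal_singleton_iff_inner_right, real_inner_comm] at hv'

lemma IsFaceOf.exists_add_smul_mem (hF : IsFaceOf F (polyCone s)) (hHF : H ⊆ F) (hz : z ∈ H)
    (hzpos : ∀ t ∈ s, t ∉ activeSet s H → 0 < ⟪z, t⟫) (hv : v ∈ polyCone (activeSet s H))
    (hvF : v ∈ perpSet (activeSet s F)) : ∃ ε : ℝ, 0 < ε ∧ z + ε • v ∈ F := by
  obtain ⟨ε, hε, hmem⟩ := exists_add_smul_mem_coneFace
    ⟨hF.subset (hHF hz), subset_perpSet_activeSet hz⟩ hzpos hv (activeSet_anti hHF) hvF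
  rw [← hF.eq_coneFace] at hmem
  exact ⟨ε, hε, hmem⟩

/-- Faces `F ⊇ H` of `polyCone s` correspond to the faces of the tangent cone
`polyCone (activeSet s H)` at `H`; `ofTangent s H` is the inverse map. -/
def toTangent (s : Finset E) (H F : Set E) : Set E := coneFace (activeSet s H) (activeSet s F)

def ofTangent (s : Finset E) (H F' : Set E) : Set E := coneFace s (activeSet (activeSet s H) F')

lemma subset_toTangent (hF : IsFaceOf F (polyCone s)) : F ⊆ toTangent s H F :=
  fun _ hv => ⟨polyCone_anti (activeSet_subset s H) (hF.subset hv), subset_perpSet_activeSet hv⟩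

lemma activeSet_toTangent (hF : IsFaceOf F (polyCone s)) (hHF : H ⊆ F) :
    activeSet (activeSet s H) (toTangent s H F) = activeSet s F := by
  ext u
  simp only [mem_activeSet]
  refine ⟨fun hu => ⟨hu.1.1, fun v hv => hu.2 v (subset_toTangent hF hv)⟩,
    fun hu => ⟨mem_activeSet.1 (activeSet_anti hHF (mem_activeSet.2 hu)),
      fun v hv => hv.2 u (mem_activeSet.2 hu)⟩⟩

lemma isFaceOf_toTangent (hHF : H ⊆ F) :
    IsFaceOf (toTangent s H F) (polyCone (activeSet s H)) :=
  isFaceOf_coneFace (activeSet_anti hHF)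

lemma isFaceOf_ofTangent : IsFaceOf (ofTangent s H F') (polyCone s) :=
  isFaceOf_coneFace ((activeSet_subset _ _).trans (activeSet_subset s H))

lemma ofTangent_toTangent (hF : IsFaceOf F (polyCone s)) (hHF : H ⊆ F) :
    ofTangent s H (toTangent s H F) = F := by
  rw [ofTangent, activeSet_toTangent hF hHF, ← hF.eq_coneFace]

lemma subset_ofTangent (hH : IsFaceOf H (polyCone s)) : H ⊆ ofTangent s H F' :=
  fun _ hv => ⟨hH.subset hv, perpSet_anti (activeSet_subset _ _) (subset_perpSet_activeSet hv)⟩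

lemma toTangent_ofTangent (hH : IsFaceOf H (polyCone s))
    (hF' : IsFaceOf F' (polyCone (activeSet s H))) : toTangent s H (ofTangent s H F') = F' := by
  obtain ⟨z, hzH, hzpos⟩ := hH.exists_relint_point
  refine subset_antisymm (fun v hv => ?_) fun v hv => ⟨hF'.subset hv, fun u hu => ?_⟩
  · have hsub : activeSet (activeSet s H) F' ⊆ activeSet s (ofTangent s H F') :=
      fun u hu => mem_activeSet.2 ⟨activeSet_subset s H (activeSet_subset _ _ hu),
        fun w hw => hw.2 u hu⟩
    rw [hF'.eq_coneFace]
    exact ⟨hv.1, perpSet_anti hsub hv.2⟩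
  · obtain ⟨ε, hε, hmem⟩ := exists_add_smul_mem_coneFace
      ⟨hH.subset hzH, subset_perpSet_activeSet hzH⟩ hzpos (hF'.subset hv) (activeSet_subset _ _)
      (subset_perpSet_activeSet hv)
    have hzu : ⟪z, u⟫ = 0 := (mem_activeSet.1 hu).2 z (subset_ofTangent hH hzH)
    have h := (mem_activeSet.1 hu).2 _ hmem
    rw [inner_add_left, real_inner_smul_left, hzu, zero_add] at h
    exact (mul_eq_zero.1 h).resolve_left hε.ne'

lemma sdim_toTangent (hF : IsFaceOf F (polyCone s)) (hHF : H ⊆ F) :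
    sdim (toTangent s H F) = sdim F := by
  rw [(isFaceOf_toTangent hHF).sdim_eq, hF.sdim_eq, activeSet_toTangent hF hHF]

lemma subset_halfspace_iff_toTangent (hH : IsFaceOf H (polyCone s)) (hF : IsFaceOf F (polyCone s))
    (hHF : H ⊆ F) (hHg : H ⊆ hyperplane g) :
    F ⊆ halfspace g ↔ toTangent s H F ⊆ halfspace g := by
  refine ⟨fun h v hv => ?_, fun h => (subset_toTangent hF).trans h⟩
  obtain ⟨z, hzH, hzpos⟩ := hH.exists_relint_point
  obtain ⟨ε, hε, hmem⟩ := hF.exists_add_smul_mem hHF hzH hzpos hv.1 hv.2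
  have h₁ : 0 ≤ ⟪z + ε • v, g⟫ := h hmem
  rw [inner_add_left, real_inner_smul_left, show ⟪z, g⟫ = 0 from hHg hzH, zero_add] at h₁
  exact nonneg_of_mul_nonneg_right h₁ hε

lemma inter_hyperplane_eq_iff_toTangent (hH : IsFaceOf H (polyCone s))
    (hF : IsFaceOf F (polyCone s)) (hHF : H ⊆ F) (hHg : H ⊆ hyperplane g) :
    F ∩ hyperplane g = H ↔ toTangent s H F ∩ hyperplane g = perpSet (activeSet s H) := by
  obtain ⟨z, hzH, hzpos⟩ := hH.exists_relint_point
  refine ⟨fun h => subset_antisymm ?_ fun v hv => ⟨⟨perpSet_subset_polyCone hv,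
    perpSet_anti (activeSet_anti hHF) hv⟩, hH.perpSet_activeSet_subset_hyperplane hHg hv⟩,
    fun h => subset_antisymm (fun v hv => ?_) fun v hv => ⟨hHF hv, hHg hv⟩⟩
  · rintro v ⟨hvF, hvg⟩
    obtain ⟨ε, hε, hmem⟩ := hF.exists_add_smul_mem hHF hzH hzpos hvF.1 hvF.2
    have hmemH : z + ε • v ∈ H := by
      rw [← h]
      refine ⟨hmem, ?_⟩
      simp only [hyperplane, Set.mem_ofPred_eq, inner_add_left, real_inner_smul_left] at hvg ⊢
      rw [hHg hzH, hvg, mul_zero, add_zero]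
    have hrepr : v = ε⁻¹ • ((z + ε • v) - z) := by
      match_scalars; field_simp; ring
    rw [hrepr, ← coe_perpSub]
    exact Submodule.smul_mem _ _ (Submodule.sub_mem _ (subset_perpSet_activeSet hmemH)
      (subset_perpSet_activeSet hzH))
  · have hv' : v ∈ perpSet (activeSet s H) := h ▸ ⟨subset_toTangent hF hv.1, hv.2⟩
    rw [hH.eq_coneFace]
    exact ⟨hF.subset hv.1, hv'⟩

lemma IsFaceOf.inner_nonpos_of_mem_tangent (hH : IsFaceOf H (polyCone s)) (hHg : H ⊆ hyperplane g)
    (hC : ∀ v ∈ polyCone s, ⟪v, g⟫ ≤ 0) (hv : v ∈ polyCone (activeSet s H)) : ⟪v, g⟫ ≤ 0 := by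
  obtain ⟨z, hzH, hzpos⟩ := hH.exists_relint_point
  obtain ⟨ε, hε, hmem⟩ := exists_add_smul_mem_polyCone (hH.subset hzH) hzpos hv
  have h := hC _ hmem
  rw [inner_add_left, real_inner_smul_left, show ⟪z, g⟫ = 0 from hHg hzH, zero_add] at h
  exact nonpos_of_mul_nonpos_right h hε

lemma IsFaceOf.span_tangent_le (hH : IsFaceOf H (polyCone s)) :
    Submodule.span ℝ (polyCone (activeSet s H)) ≤ Submodule.span ℝ (polyCone s) := by
  obtain ⟨z, hzH, hzpos⟩ := hH.exists_relint_point
  refine Submodule.span_le.2 fun v hv => ?_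
  obtain ⟨ε, hε, hmem⟩ := exists_add_smul_mem_polyCone (hH.subset hzH) hzpos hv
  have hrepr : v = ε⁻¹ • ((z + ε • v) - z) := by
    match_scalars
    field_simp
    ring
  rw [SetLike.mem_coe, hrepr]
  exact Submodule.smul_mem _ _ (Submodule.sub_mem _ (Submodule.subset_span hmem)
    (Submodule.subset_span (hH.subset hzH)))

end Tangent

section Insert

variable {s : Finset E} {F : Set E} {g : E}

lemma IsFaceOf.insert_of_subset_halfspace (hF : IsFaceOf F (polyCone s)) (hg : F ⊆ halfspace g) :
    IsFaceOf F (polyCone (insert g s)) := by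
  obtain ⟨w, hw, rfl⟩ := hF
  refine ⟨w, fun v hv => hw ((polyCone_insert g s ▸ hv).1), ?_⟩
  rw [polyCone_insert, Set.inter_right_comm, Set.inter_eq_left.2 hg]

lemma IsFaceOf.of_insert (hsub : perpSet s ⊆ hyperplane g)
    (hF : IsFaceOf F (polyCone (insert g s))) (hFg : F ∩ hyperplane g = perpSet s) :
    IsFaceOf F (polyCone s) := by
  by_cases hFz : F ⊆ hyperplane g
  · rw [← Set.inter_eq_left.2 hFz, hFg]
    exact isFaceOf_perpSet s
  obtain ⟨x, hxF, hxg⟩ := Set.not_subset.1 hFz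
  have hxpos : 0 < ⟪x, g⟫ := (hF.subset hxF g (Finset.mem_insert_self g s)).lt_of_ne' hxg
  set T := activeSet (insert g s) F
  have hTs : T ⊆ s := fun t ht => by
    rcases Finset.mem_insert.1 (activeSet_subset _ _ ht) with rfl | h
    · exact absurd ((mem_activeSet.1 ht).2 x hxF) hxg
    · exact h
  have hFT : F = coneFace s T ∩ halfspace g := by
    rw [hF.eq_coneFace, coneFace, coneFace, polyCone_insert, Set.inter_right_comm]
  have hxT : x ∈ coneFace s T := (hFT ▸ hxF).1
  suffices coneFace s T ⊆ halfspace g by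
    rw [hFT, Set.inter_eq_left.2 this]
    exact isFaceOf_coneFace hTs
  intro f hf
  by_contra hfg
  have hfneg : ⟪f, g⟫ < 0 := lt_of_not_ge hfg
  set μ := ⟪x, g⟫ / -⟪f, g⟫ with hμdef
  have hμ : 0 < μ := div_pos hxpos (neg_pos.2 hfneg)
  have hp : x + μ • f ∈ coneFace s T := add_mem_coneFace hxT (smul_mem_coneFace hμ.le hf)
  have hpg : ⟪x + μ • f, g⟫ = 0 := by
    rw [inner_add_left, real_inner_smul_left, hμdef, div_neg, neg_mul, div_mul_cancel₀ _ hfneg.ne,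
      add_neg_cancel]
  have hpL : x + μ • f ∈ perpSet s := hFg ▸ ⟨hFT ▸ ⟨hp, hpg.ge⟩, hpg⟩
  have hfC : -f ∈ polyCone s := by
    have hrepr : -f = μ⁻¹ • (x + -(x + μ • f)) := by
      match_scalars; field_simp; ring
    rw [hrepr]
    exact smul_mem_polyCone (inv_nonneg.2 hμ.le)
      (add_mem_polyCone hxT.1 (perpSet_subset_polyCone (neg_mem_perpSet hpL)))
  exact hfg (hsub (mem_perpSet_of_neg_mem hf.1 hfC)).ge

lemma filter_faces_subset_halfspace (hC : ∀ v ∈ polyCone s, ⟪v, g⟫ ≤ 0) :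
    (faces s).filter (· ⊆ halfspace g) = faces (insert g s) := by
  ext F
  rw [Finset.mem_filter, ← isFaceOf_iff_mem_faces, ← isFaceOf_iff_mem_faces]
  refine ⟨fun ⟨hF, hFg⟩ => hF.insert_of_subset_halfspace hFg, fun hF => ?_⟩
  have hFg : F ⊆ halfspace g := fun v hv => hF.subset hv g (Finset.mem_insert_self g s)
  refine ⟨?_, hFg⟩
  set T := activeSet (insert g s) F
  have hT : T.erase g ⊆ s := fun t ht => by
    rcases Finset.mem_insert.1 (activeSet_subset _ _ (Finset.mem_of_mem_erase ht)) with rfl | h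
    · exact absurd rfl (Finset.ne_of_mem_erase ht)
    · exact h
  have hFT : F = coneFace s (T.erase g) ∩ hyperplane (-g) := by
    ext v
    rw [hF.eq_coneFace]
    simp only [coneFace, polyCone_insert, perpSet, hyperplane, halfspace, Set.mem_inter_iff,
      Set.mem_ofPred_eq, inner_neg_right, neg_eq_zero, Finset.mem_erase]
    constructor
    · rintro ⟨⟨hv, hvg⟩, hvT⟩
      exact ⟨⟨hv, fun t ht => hvT t ht.2⟩, le_antisymm (hC v hv) hvg⟩
    · rintro ⟨⟨hv, hvT⟩, hvg⟩
      refine ⟨⟨hv, hvg.ge⟩, fun t ht => ?_⟩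
      by_cases htg : t = g
      · rwa [htg]
      · exact hvT t ⟨htg, ht⟩
  rw [hFT]
  refine (isFaceOf_coneFace hT).inter_hyperplane fun v hv => ?_
  simpa [halfspace, inner_neg_right] using hC v hv.1

end Insert

section EulerChar

def eulerChar (s : Finset E) : ℝ := ∑ F ∈ faces s, (-1 : ℝ) ^ sdim F

def eulerCharAbove (s : Finset E) (g : E) : ℝ :=
  ∑ F ∈ (faces s).filter (fun F => F ⊆ halfspace g ∧ F ∩ hyperplane g = perpSet s),
    (-1 : ℝ) ^ sdim F

variable {s : Finset E} {H : Set E} {g : E}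

lemma eulerCharAbove_eq_zero_of_not_subset (h : ¬ perpSet s ⊆ hyperplane g) :
    eulerCharAbove s g = 0 := by
  refine Finset.sum_eq_zero fun F hF => absurd ?_ h
  rw [← (Finset.mem_filter.1 hF).2.2]
  exact Set.inter_subset_right

lemma eulerCharAbove_insert (hsub : perpSet s ⊆ hyperplane g) :
    eulerCharAbove (insert g s) g = eulerCharAbove s g := by
  rw [eulerCharAbove, eulerCharAbove, perpSet_insert hsub]
  congr 1
  ext F
  simp only [Finset.mem_filter, ← isFaceOf_iff_mem_faces]
  exact ⟨fun ⟨hF, hFg, hFL⟩ => ⟨hF.of_insert hsub hFL, hFg, hFL⟩,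
    fun ⟨hF, hFg, hFL⟩ => ⟨hF.insert_of_subset_halfspace hFg, hFg, hFL⟩⟩

lemma eulerCharAbove_eq_of_inner_nonpos (h : ∀ v ∈ polyCone s, ⟪v, g⟫ ≤ 0) :
    eulerCharAbove s g = (-1 : ℝ) ^ sdim (perpSet s) := by
  have hfilter : (faces s).filter (fun F => F ⊆ halfspace g ∧ F ∩ hyperplane g = perpSet s)
      = {perpSet s} := by
    ext F
    simp only [Finset.mem_filter, Finset.mem_singleton, ← isFaceOf_iff_mem_faces]
    refine ⟨fun ⟨hF, hFg, hFL⟩ => ?_, ?_⟩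
    · rw [← hFL]
      exact (Set.inter_eq_left.2 fun v hv => le_antisymm (h v (hF.subset hv)) (hFg hv)).symm
    · rintro rfl
      have hLg := perpSet_subset_hyperplane_of_inner_nonpos h
      exact ⟨isFaceOf_perpSet s, fun v hv => (hLg hv).ge, Set.inter_eq_left.2 hLg⟩
  rw [eulerCharAbove, hfilter, Finset.sum_singleton]

lemma sum_faces_inter_hyperplane_eq (hH : IsFaceOf H (polyCone s)) (hHg : H ⊆ hyperplane g) :
    ∑ F ∈ (faces s).filter (fun F => F ⊆ halfspace g ∧ F ∩ hyperplane g = H), (-1 : ℝ) ^ sdim F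
      = eulerCharAbove (activeSet s H) g := by
  have hmem : ∀ F ∈ (faces s).filter (fun F => F ⊆ halfspace g ∧ F ∩ hyperplane g = H),
      IsFaceOf F (polyCone s) ∧ H ⊆ F ∧ F ⊆ halfspace g ∧ F ∩ hyperplane g = H := by
    intro F hF
    obtain ⟨hF, hFg, hFH⟩ := Finset.mem_filter.1 hF
    exact ⟨isFaceOf_iff_mem_faces.2 hF, hFH ▸ Set.inter_subset_left, hFg, hFH⟩
  refine Finset.sum_nbij' (toTangent s H) (ofTangent s H) (fun F hF => ?_) (fun F' hF' => ?_)
    (fun F hF => ?_) (fun F' hF' => ?_) (fun F hF => ?_)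
  · obtain ⟨hF, hHF, hFg, hFH⟩ := hmem F hF
    exact Finset.mem_filter.2 ⟨isFaceOf_iff_mem_faces.1 (isFaceOf_toTangent hHF),
      (subset_halfspace_iff_toTangent hH hF hHF hHg).1 hFg,
      (inter_hyperplane_eq_iff_toTangent hH hF hHF hHg).1 hFH⟩
  · obtain ⟨hF', hFg', hFH'⟩ := Finset.mem_filter.1 hF'
    have hF'f := isFaceOf_iff_mem_faces.2 hF'
    have hHF := subset_ofTangent (F' := F') hH
    have hback := toTangent_ofTangent hH hF'f
    refine Finset.mem_filter.2 ⟨isFaceOf_iff_mem_faces.1 isFaceOf_ofTangent, ?_, ?_⟩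
    · rwa [subset_halfspace_iff_toTangent hH isFaceOf_ofTangent hHF hHg, hback]
    · rwa [inter_hyperplane_eq_iff_toTangent hH isFaceOf_ofTangent hHF hHg, hback]
  · obtain ⟨hF, hHF, -⟩ := hmem F hF
    exact ofTangent_toTangent hF hHF
  · exact toTangent_ofTangent hH (isFaceOf_iff_mem_faces.2 (Finset.mem_filter.1 hF').1)
  · obtain ⟨hF, hHF, -⟩ := hmem F hF
    rw [sdim_toTangent hF hHF]

lemma sum_faces_subset_halfspace :
    ∑ F ∈ (faces s).filter (· ⊆ halfspace g), (-1 : ℝ) ^ sdim F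
      = ∑ H ∈ (faces s).filter (· ⊆ hyperplane g), eulerCharAbove (activeSet s H) g := by
  have hmaps : ∀ F ∈ (faces s).filter (· ⊆ halfspace g),
      F ∩ hyperplane g ∈ (faces s).filter (· ⊆ hyperplane g) := fun F hF => by
    obtain ⟨hF, hFg⟩ := Finset.mem_filter.1 hF
    exact Finset.mem_filter.2 ⟨isFaceOf_iff_mem_faces.1
      ((isFaceOf_iff_mem_faces.2 hF).inter_hyperplane hFg), Set.inter_subset_right⟩
  rw [← Finset.sum_fiberwise_of_maps_to hmaps]
  refine Finset.sum_congr rfl fun H hH => ?_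
  obtain ⟨hH, hHg⟩ := Finset.mem_filter.1 hH
  rw [Finset.filter_filter, ← sum_faces_inter_hyperplane_eq (isFaceOf_iff_mem_faces.2 hH) hHg]

/-- Sorting the faces of `polyCone (insert g s)` by their trace on `hyperplane g` writes its Euler
characteristic as a sum of tangent-cone counts, all of which vanish except the one at the lineality
space, which is `eulerCharAbove s g`. -/
lemma eulerCharAbove_eq_zero_of_insert (hsub : perpSet s ⊆ hyperplane g)
    (hq : ∃ q ∈ polyCone s, 0 < ⟪q, g⟫)
    (hχ : polyCone (insert g s) ≠ perpSet (insert g s) → eulerChar (insert g s) = 0)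
    (ih : ∀ H, IsFaceOf H (polyCone (insert g s)) → perpSet (insert g s) ⊂ H → ∀ g',
      (∃ p ∈ polyCone (activeSet (insert g s) H), 0 < ⟪p, g'⟫) →
        eulerCharAbove (activeSet (insert g s) H) g' = 0) :
    eulerCharAbove s g = 0 := by
  obtain ⟨q, hq, hqg⟩ := hq
  set s' := insert g s
  have hq' : q ∈ polyCone s' := polyCone_insert g s ▸ ⟨hq, hqg.le⟩
  have hne : polyCone s' ≠ perpSet s' :=
    fun h => hqg.ne' ((h ▸ hq') g (Finset.mem_insert_self g s))
  have hfaces : (faces s').filter (· ⊆ halfspace g) = faces s' :=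
    Finset.filter_true_of_mem fun F hF =>
      (isFaceOf_iff_mem_faces.2 hF).subset.trans fun v hv => hv g (Finset.mem_insert_self g s)
  have hLmem : perpSet s' ∈ (faces s').filter (· ⊆ hyperplane g) :=
    Finset.mem_filter.2 ⟨isFaceOf_iff_mem_faces.1 (isFaceOf_perpSet s'), perpSet_insert hsub ▸ hsub⟩
  have hterm : ∀ H ∈ (faces s').filter (· ⊆ hyperplane g), H ≠ perpSet s' →
      eulerCharAbove (activeSet s' H) g = 0 := fun H hH hHL => by
    have hH := isFaceOf_iff_mem_faces.2 (Finset.mem_filter.1 hH).1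
    exact ih H hH (Set.ssubset_iff_subset_ne.2 ⟨hH.perpSet_subset, Ne.symm hHL⟩) g
      ⟨q, polyCone_anti (activeSet_subset _ _) hq', hqg⟩
  calc eulerCharAbove s g = eulerCharAbove s' g := (eulerCharAbove_insert hsub).symm
    _ = eulerChar s' := by
      rw [eulerChar, ← hfaces, sum_faces_subset_halfspace,
        Finset.sum_eq_single_of_mem _ hLmem hterm, activeSet_perpSet]
    _ = 0 := hχ hne

end EulerChar

lemma exists_inner_injOn (U : Finset E) : ∃ l : E, Set.InjOn (fun u => ⟪u, l⟫) U := by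
  set P := ((U ×ˢ U).filter fun p => p.1 ≠ p.2).image fun p => (ℝ ∙ (p.1 - p.2))ᗮ
  have htop : ⊤ ∉ P := by
    simp only [P, Finset.mem_image, Finset.mem_filter, not_exists, not_and]
    rintro p ⟨-, hp⟩ h
    rw [Submodule.orthogonal_eq_top_iff, Submodule.span_singleton_eq_bot, sub_eq_zero] at h
    exact hp h
  obtain ⟨l, hl⟩ :=
    (Set.ne_univ_iff_exists_notMem _).1 (Subspace.biUnion_ne_univ_of_top_notMem htop)
  refine ⟨l, fun a ha b hb hab => by_contra fun hne => hl ?_⟩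
  refine Set.mem_biUnion (Finset.mem_coe.2 (Finset.mem_image_of_mem _ (a := (a, b))
    (Finset.mem_filter.2 ⟨Finset.mem_product.2 ⟨ha, hb⟩, hne⟩))) ?_
  rw [SetLike.mem_coe, Submodule.mem_orthogonal_singleton_iff_inner_right, inner_sub_left]
  exact sub_eq_zero.2 hab

section Base

/-- Its inner product with a point of `polyCone s` is positive off the lineality space. -/
def constraintSum (s : Finset E) : E := ∑ t ∈ s, t

variable {s : Finset E} {X F : Set E} {u v w : E}

lemma inner_constraintSum (v : E) : ⟪v, constraintSum s⟫ = ∑ t ∈ s, ⟪v, t⟫ := inner_sum _ _ _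

lemma inner_constraintSum_nonneg (hv : v ∈ polyCone s) : 0 ≤ ⟪v, constraintSum s⟫ :=
  (inner_constraintSum v).symm ▸ Finset.sum_nonneg hv

lemma inner_constraintSum_eq_zero_iff (hv : v ∈ polyCone s) :
    ⟪v, constraintSum s⟫ = 0 ↔ v ∈ perpSet s := by
  rw [inner_constraintSum, Finset.sum_eq_zero_iff_of_nonneg hv]
  rfl

lemma inner_constraintSum_of_mem_perpSet (hv : v ∈ perpSet s) : ⟪v, constraintSum s⟫ = 0 :=
  (inner_constraintSum_eq_zero_iff (perpSet_subset_polyCone hv)).2 hv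

lemma isClosed_polyCone (s : Finset E) : IsClosed (polyCone s) := by
  have : polyCone s = ⋂ t ∈ s, {v : E | 0 ≤ ⟪v, t⟫} := by ext; simp [polyCone]
  rw [this]
  exact isClosed_biInter fun t _ => isClosed_le continuous_const (by fun_prop)

lemma IsFaceOf.isClosed (hF : IsFaceOf F (polyCone s)) : IsClosed F := by
  obtain ⟨y, -, rfl⟩ := hF
  exact (isClosed_polyCone s).inter (isClosed_eq (by fun_prop) continuous_const)

lemma eq_zero_of_mem_perpSet_of_mem_orthogonal (h₁ : v ∈ perpSet s) (h₂ : v ∈ (perpSub s)ᗮ) :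
    v = 0 :=
  inner_self_eq_zero.1 ((Submodule.mem_orthogonal _ _).1 h₂ v h₁)

/-- A compact slice of `X`, transversal to the rays of `X` modulo the lineality space. -/
def base (s : Finset E) (X : Set E) : Set E :=
  X ∩ ((perpSub s)ᗮ : Set E) ∩ {v | ⟪v, constraintSum s⟫ = 1}

lemma base_mono {Y : Set E} (h : X ⊆ Y) : base s X ⊆ base s Y :=
  fun _ hv => ⟨⟨h hv.1.1, hv.1.2⟩, hv.2⟩

lemma inner_constraintSum_of_mem_base (hu : u ∈ base s X) : ⟪u, constraintSum s⟫ = 1 := hu.2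

lemma not_mem_perpSet_of_mem_base (hu : u ∈ base s X) : u ∉ perpSet s := fun hm => by
  simpa [inner_constraintSum_of_mem_base hu] using inner_constraintSum_of_mem_perpSet hm

variable [FiniteDimensional ℝ E]

lemma exists_mul_norm_le_inner {K : Set E} (hK : IsClosed K)
    (hsmul : ∀ v ∈ K, ∀ a : ℝ, 0 ≤ a → a • v ∈ K) {b : E} (hb : ∀ v ∈ K, v ≠ 0 → 0 < ⟪v, b⟫) :
    ∃ m : ℝ, 0 < m ∧ ∀ v ∈ K, m * ‖v‖ ≤ ⟪v, b⟫ := by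
  obtain ⟨m, hm, hmin⟩ := ((isCompact_sphere (0 : E) 1).inter_left hK).exists_forall_le'
    (f := fun v => ⟪v, b⟫) (by fun_prop)
    fun v hv => hb v hv.1 (Metric.ne_of_mem_sphere hv.2 one_ne_zero)
  refine ⟨m, hm, fun v hv => ?_⟩
  rcases eq_or_ne v 0 with rfl | hv0
  · simp
  have hn : 0 < ‖v‖ := norm_pos_iff.2 hv0
  have h := hmin (‖v‖⁻¹ • v) ⟨hsmul v hv _ (inv_nonneg.2 hn.le), by simp [norm_smul, hn.ne']⟩
  rw [real_inner_smul_left] at h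
  calc m * ‖v‖ ≤ ‖v‖⁻¹ * ⟪v, b⟫ * ‖v‖ := by gcongr
    _ = ⟪v, b⟫ := by field_simp

def orthPart (s : Finset E) (v : E) : E := v - (perpSub s).starProjection v

lemma orthPart_mem_orthogonal (s : Finset E) (v : E) : orthPart s v ∈ (perpSub s)ᗮ :=
  (perpSub s).sub_starProjection_mem_orthogonal v

lemma starProjection_mem_perpSet (s : Finset E) (v : E) :
    (perpSub s).starProjection v ∈ perpSet s :=
  (perpSub s).starProjection_apply_mem v

lemma IsFaceOf.orthPart_mem (hF : IsFaceOf F (polyCone s)) (hv : v ∈ F) : orthPart s v ∈ F := by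
  rw [orthPart, sub_eq_add_neg]
  exact hF.add_perpSet_mem hv (neg_mem_perpSet (starProjection_mem_perpSet s v))

lemma inner_orthPart (hw : ∀ m ∈ perpSet s, ⟪m, w⟫ = 0) (v : E) :
    ⟪orthPart s v, w⟫ = ⟪v, w⟫ := by
  rw [orthPart, inner_sub_left, hw _ (starProjection_mem_perpSet s v), sub_zero]

lemma exists_mul_norm_le_inner_of_polyCone {b : E}
    (hb : ∀ v ∈ polyCone s, v ∈ (perpSub s)ᗮ → v ≠ 0 → 0 < ⟪v, b⟫) :
    ∃ m : ℝ, 0 < m ∧ ∀ v ∈ polyCone s, v ∈ (perpSub s)ᗮ → m * ‖v‖ ≤ ⟪v, b⟫ := by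
  obtain ⟨m, hm, h⟩ := exists_mul_norm_le_inner (K := polyCone s ∩ (perpSub s)ᗮ)
    ((isClosed_polyCone s).inter (Submodule.isClosed_orthogonal _))
    (fun v hv a ha => ⟨smul_mem_polyCone ha hv.1, Submodule.smul_mem _ a hv.2⟩)
    fun v hv => hb v hv.1 hv.2
  exact ⟨m, hm, fun v hv hvL => h v ⟨hv, hvL⟩⟩

lemma IsFaceOf.isCompact_base (hX : IsFaceOf X (polyCone s)) : IsCompact (base s X) := by
  obtain ⟨m, hm, hbound⟩ := exists_mul_norm_le_inner_of_polyCone (b := constraintSum s)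
    fun v hv hvL hv0 => (inner_constraintSum_nonneg hv).lt_of_ne' fun h =>
      hv0 (eq_zero_of_mem_perpSet_of_mem_orthogonal ((inner_constraintSum_eq_zero_iff hv).1 h) hvL)
  refine Metric.isCompact_of_isClosed_isBounded (((hX.isClosed).inter
    (Submodule.isClosed_orthogonal _)).inter (isClosed_eq (by fun_prop) continuous_const))
    ((Metric.isBounded_closedBall (x := 0) (r := m⁻¹)).subset fun v hv => ?_)
  have h := hbound v (hX.subset hv.1.1) hv.1.2
  rw [inner_constraintSum_of_mem_base hv] at h
  rwa [Metric.mem_closedBall, dist_zero_right, ← mul_one m⁻¹, le_inv_mul_iff₀ hm]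

lemma IsFaceOf.exists_base_smul_eq_orthPart (hX : IsFaceOf X (polyCone s)) (hv : v ∈ X)
    (hvL : v ∉ perpSet s) :
    ∃ u ∈ base s X, 0 < ⟪v, constraintSum s⟫ ∧ orthPart s v = ⟪v, constraintSum s⟫ • u := by
  have hτ : 0 < ⟪v, constraintSum s⟫ := (inner_constraintSum_nonneg (hX.subset hv)).lt_of_ne'
    fun h => hvL ((inner_constraintSum_eq_zero_iff (hX.subset hv)).1 h)
  refine ⟨⟪v, constraintSum s⟫⁻¹ • orthPart s v, ⟨⟨hX.smul_mem (inv_nonneg.2 hτ.le)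
    (hX.orthPart_mem hv), Submodule.smul_mem _ _ (orthPart_mem_orthogonal s v)⟩, ?_⟩, hτ, ?_⟩
  · simp only [Set.mem_ofPred_eq, real_inner_smul_left,
      inner_orthPart (fun _ => inner_constraintSum_of_mem_perpSet)]
    field_simp
  · rw [smul_smul, mul_inv_cancel₀ hτ.ne', one_smul]

lemma IsFaceOf.exists_base_inner_eq (hX : IsFaceOf X (polyCone s)) (hv : v ∈ X)
    (hvL : v ∉ perpSet s) (hw : ∀ m ∈ perpSet s, ⟪m, w⟫ = 0) :
    ∃ u ∈ base s X, 0 < ⟪v, constraintSum s⟫ ∧ ⟪v, w⟫ = ⟪v, constraintSum s⟫ * ⟪u, w⟫ := by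
  obtain ⟨u, hu, hτ, hv'⟩ := hX.exists_base_smul_eq_orthPart hv hvL
  exact ⟨u, hu, hτ, by rw [← inner_orthPart hw, hv', real_inner_smul_left]⟩

lemma IsFaceOf.base_nonempty (hX : IsFaceOf X (polyCone s)) (hne : ¬ X ⊆ perpSet s) :
    (base s X).Nonempty := by
  obtain ⟨v, hv, hvL⟩ := Set.not_subset.1 hne
  obtain ⟨u, hu, -⟩ := hX.exists_base_smul_eq_orthPart hv hvL
  exact ⟨u, hu⟩

end Base

section Rays

variable {s : Finset E} {X F R : Set E} {u m w : E} {c : ℝ}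

lemma inner_sub_smul_of_mem_base (hu : u ∈ base s X) (w : E) (c : ℝ) :
    ⟪u, w - c • constraintSum s⟫ = ⟪u, w⟫ - c := by
  rw [inner_sub_right, real_inner_smul_right, inner_constraintSum_of_mem_base hu, mul_one]

lemma inner_sub_smul_of_mem_perpSet (hw : ∀ m ∈ perpSet s, ⟪m, w⟫ = 0) (hm : m ∈ perpSet s)
    (c : ℝ) : ⟪m, w - c • constraintSum s⟫ = 0 := by
  rw [inner_sub_right, real_inner_smul_right, hw m hm, inner_constraintSum_of_mem_perpSet hm]
  ring

/-- The rays of `polyCone s` modulo its lineality space. -/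
def IsRayFace (s : Finset E) (R : Set E) : Prop :=
  Minimal (fun F => IsFaceOf F (polyCone s) ∧ perpSet s ⊂ F) R

def rayFaces (s : Finset E) : Finset (Set E) := (faces s).filter (IsRayFace s)

lemma IsRayFace.isFaceOf (hR : IsRayFace s R) : IsFaceOf R (polyCone s) := hR.1.1

lemma IsRayFace.perpSet_ssubset (hR : IsRayFace s R) : perpSet s ⊂ R := hR.1.2

lemma IsRayFace.not_subset_perpSet (hR : IsRayFace s R) : ¬ R ⊆ perpSet s :=
  hR.perpSet_ssubset.not_subset

lemma IsRayFace.eq_of_subset (hR : IsRayFace s R) (hF : IsFaceOf F (polyCone s))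
    (hLF : perpSet s ⊂ F) (hFR : F ⊆ R) : F = R :=
  hR.eq_of_le ⟨hF, hLF⟩ hFR

lemma mem_rayFaces : R ∈ rayFaces s ↔ IsRayFace s R := by
  rw [rayFaces, Finset.mem_filter, ← isFaceOf_iff_mem_faces]
  exact ⟨fun h => h.2, fun h => ⟨h.isFaceOf, h⟩⟩

lemma exists_isRayFace_subset (hX : IsFaceOf X (polyCone s)) (hLX : perpSet s ⊂ X) :
    ∃ R, IsRayFace s R ∧ R ⊆ X := by
  have hfin : {F | IsFaceOf F (polyCone s) ∧ perpSet s ⊂ F}.Finite :=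
    (faces s).finite_toSet.subset fun F hF => isFaceOf_iff_mem_faces.1 hF.1
  obtain ⟨R, hRX, hR⟩ := hfin.isPWO.exists_le_minimal (a := X) ⟨hX, hLX⟩
  exact ⟨R, hR, hRX⟩

lemma IsFaceOf.perpSet_ssubset_inter_hyperplane (hX : IsFaceOf X (polyCone s))
    (hw : ∀ m ∈ perpSet s, ⟪m, w⟫ = 0) (hu : u ∈ base s X) (huw : ⟪u, w⟫ = c) :
    perpSet s ⊂ X ∩ hyperplane (w - c • constraintSum s) := by
  refine Set.ssubset_iff_subset_ne.2 ⟨fun m hm => ⟨hX.perpSet_subset hm,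
    inner_sub_smul_of_mem_perpSet hw hm c⟩, fun h => not_mem_perpSet_of_mem_base hu ?_⟩
  rw [h]
  exact ⟨hu.1.1, by rw [hyperplane, Set.mem_ofPred_eq, inner_sub_smul_of_mem_base hu, huw,
    sub_self]⟩

variable [FiniteDimensional ℝ E]

lemma IsFaceOf.subset_halfspace_of_le (hX : IsFaceOf X (polyCone s))
    (hw : ∀ m ∈ perpSet s, ⟪m, w⟫ = 0) (hc : ∀ u ∈ base s X, c ≤ ⟪u, w⟫) :
    X ⊆ halfspace (w - c • constraintSum s) := by
  intro v hv
  by_cases hvL : v ∈ perpSet s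
  · exact (inner_sub_smul_of_mem_perpSet hw hvL c).ge
  obtain ⟨u, hu, hτ, hvw⟩ := hX.exists_base_inner_eq hv hvL hw
  have := hc u hu
  simp only [halfspace, Set.mem_ofPred_eq, inner_sub_right, real_inner_smul_right, hvw]
  nlinarith

lemma IsFaceOf.exists_subset_halfspace (hX : IsFaceOf X (polyCone s)) (hXL : ¬ X ⊆ perpSet s)
    (hw : ∀ m ∈ perpSet s, ⟪m, w⟫ = 0) :
    ∃ u ∈ base s X, (∀ u' ∈ base s X, ⟪u, w⟫ ≤ ⟪u', w⟫) ∧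
      X ⊆ halfspace (w - ⟪u, w⟫ • constraintSum s) := by
  obtain ⟨u, hu, hmin⟩ := hX.isCompact_base.exists_isMinOn (hX.base_nonempty hXL)
    (f := fun v => ⟪v, w⟫) (by fun_prop)
  exact ⟨u, hu, fun u' hu' => hmin hu', hX.subset_halfspace_of_le hw fun u' hu' => hmin hu'⟩

lemma IsRayFace.base_subsingleton (hR : IsRayFace s R) : (base s R).Subsingleton := by
  intro u₁ hu₁ u₂ hu₂
  set w := u₁ - u₂
  have hw : ∀ m ∈ perpSet s, ⟪m, w⟫ = 0 := fun m hm => by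
    rw [inner_sub_right, (Submodule.mem_orthogonal _ _).1 hu₁.1.2 m hm,
      (Submodule.mem_orthogonal _ _).1 hu₂.1.2 m hm, sub_zero]
  obtain ⟨u, hu, -, hRw⟩ := hR.isFaceOf.exists_subset_halfspace hR.not_subset_perpSet hw
  have hcut := hR.eq_of_subset (hR.isFaceOf.inter_hyperplane hRw)
    (hR.isFaceOf.perpSet_ssubset_inter_hyperplane hw hu rfl) Set.inter_subset_left
  have hlevel : ∀ u' ∈ base s R, ⟪u', w⟫ = ⟪u, w⟫ := fun u' hu' => by
    have h := (hcut.symm ▸ hu'.1.1 : u' ∈ R ∩ _).2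
    rw [hyperplane, Set.mem_ofPred_eq, inner_sub_smul_of_mem_base hu'] at h
    linarith
  have h : ⟪w, w⟫ = 0 := by rw [inner_sub_left, hlevel u₁ hu₁, hlevel u₂ hu₂, sub_self]
  exact sub_eq_zero.1 (inner_self_eq_zero.1 h)

/-- The unique point of `base s R` for a ray face `R`. -/
def rayPoint (s : Finset E) (R : Set E) : E := Classical.epsilon (· ∈ base s R)

lemma IsRayFace.rayPoint_mem (hR : IsRayFace s R) : rayPoint s R ∈ base s R :=
  Classical.epsilon_spec (hR.isFaceOf.base_nonempty hR.not_subset_perpSet)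

lemma IsRayFace.eq_rayPoint (hR : IsRayFace s R) (hu : u ∈ base s R) : u = rayPoint s R :=
  hR.base_subsingleton hu hR.rayPoint_mem

/-- Cut `X` along a constraint that is active on `R` but not on `X`. -/
lemma IsRayFace.exists_ne_of_ssubset (hR : IsRayFace s R) (hX : IsFaceOf X (polyCone s))
    (hRX : R ⊂ X) : ∃ R', IsRayFace s R' ∧ R' ⊆ X ∧ R' ≠ R := by
  obtain ⟨w, hwR, hwX⟩ : ∃ w ∈ activeSet s R, w ∉ activeSet s X := by
    by_contra! h
    refine hRX.ne ?_
    rw [hR.isFaceOf.eq_coneFace, hX.eq_coneFace, (activeSet_anti hRX.subset).antisymm h]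
  have hws : w ∈ s := activeSet_subset s R hwR
  have hw : ∀ m ∈ perpSet s, ⟪m, -w⟫ = 0 := fun m hm => by rw [inner_neg_right, hm w hws, neg_zero]
  have hXL : ¬ X ⊆ perpSet s := fun h => hR.not_subset_perpSet (hRX.subset.trans h)
  obtain ⟨u, hu, hmin, hXw⟩ := hX.exists_subset_halfspace hXL hw
  obtain ⟨R', hR', hR'X⟩ := exists_isRayFace_subset (hX.inter_hyperplane hXw)
    (hX.perpSet_ssubset_inter_hyperplane hw hu rfl)
  refine ⟨R', hR', hR'X.trans Set.inter_subset_left, ?_⟩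
  intro hR'R
  have hpR := hR.rayPoint_mem
  have hp0 : ⟪rayPoint s R, w⟫ = 0 := (mem_activeSet.1 hwR).2 _ hpR.1.1
  have hu0 : ⟪u, -w⟫ = 0 := by
    have h := (hR'X (by rw [hR'R]; exact hpR.1.1)).2
    rwa [hyperplane, Set.mem_ofPred_eq, inner_sub_smul_of_mem_base hpR, inner_neg_right, hp0,
      neg_zero, zero_sub, neg_eq_zero] at h
  obtain ⟨x, hxX, hxw⟩ : ∃ x ∈ X, ⟪x, w⟫ ≠ 0 := by
    by_contra! h
    exact hwX (mem_activeSet.2 ⟨hws, h⟩)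
  obtain ⟨u', hu', hτ, hxu'⟩ := hX.exists_base_inner_eq hxX (fun hm => hxw (hm w hws)) hw
  have hxpos : 0 < ⟪x, w⟫ := (hX.subset hxX w hws).lt_of_ne' hxw
  have hmin' := hmin u' hu'
  rw [hu0, inner_neg_right] at hmin'
  rw [inner_neg_right, inner_neg_right] at hxu'
  nlinarith

lemma IsRayFace.sdim_eq (hR : IsRayFace s R) : sdim R = sdim (perpSet s) + 1 := by
  refine le_antisymm ?_ (sdim_lt_sdim_of_ssubset hR.isFaceOf (isFaceOf_perpSet s)
    hR.perpSet_ssubset)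
  set p := rayPoint s R
  have hspan : Submodule.span ℝ R ≤ perpSub s ⊔ ℝ ∙ p := Submodule.span_le.2 fun v hv => by
    by_cases hvL : v ∈ perpSet s
    · exact Submodule.mem_sup_left hvL
    obtain ⟨u, hu, -, hv'⟩ := hR.isFaceOf.exists_base_smul_eq_orthPart hv hvL
    rw [hR.eq_rayPoint hu] at hv'
    have hdecomp : v = (perpSub s).starProjection v + ⟪v, constraintSum s⟫ • p := by
      rw [← hv', orthPart, add_sub_cancel]
    rw [SetLike.mem_coe, hdecomp]
    exact Submodule.add_mem_sup (starProjection_mem_perpSet s v)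
      (Submodule.smul_mem _ _ (Submodule.mem_span_singleton_self p))
  calc sdim R ≤ Module.finrank ℝ ↥(perpSub s ⊔ ℝ ∙ p) := Submodule.finrank_mono hspan
    _ = sdim (perpSet s) + 1 := by
      rw [Submodule.finrank_sup_span_singleton (not_mem_perpSet_of_mem_base hR.rayPoint_mem),
        sdim_perpSet]

lemma rayPoint_injOn : Set.InjOn (rayPoint s) {R | IsRayFace s R} := by
  intro R₁ hR₁ R₂ hR₂ heq
  have hR₁ : IsRayFace s R₁ := hR₁
  have hR₂ : IsRayFace s R₂ := hR₂
  have hp : rayPoint s R₁ ∈ base s (R₁ ∩ R₂) :=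
    ⟨⟨⟨hR₁.rayPoint_mem.1.1, heq ▸ hR₂.rayPoint_mem.1.1⟩, hR₁.rayPoint_mem.1.2⟩,
      hR₁.rayPoint_mem.2⟩
  have hface := hR₁.isFaceOf.inter hR₂.isFaceOf
  have hL : perpSet s ⊂ R₁ ∩ R₂ := Set.ssubset_iff_subset_ne.2
    ⟨Set.subset_inter hR₁.isFaceOf.perpSet_subset hR₂.isFaceOf.perpSet_subset,
      fun h => not_mem_perpSet_of_mem_base hp (h ▸ hp.1.1)⟩
  exact (hR₁.eq_of_subset hface hL Set.inter_subset_left).symm.trans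
    (hR₂.eq_of_subset hface hL Set.inter_subset_right)

lemma exists_inner_injOn_rayPoint (s : Finset E) :
    ∃ l : E, (∀ m ∈ perpSet s, ⟪m, l⟫ = 0) ∧
      Set.InjOn (fun R => ⟪rayPoint s R, l⟫) {R | IsRayFace s R} := by
  obtain ⟨l₀, hl₀⟩ := exists_inner_injOn ((rayFaces s).image (rayPoint s))
  refine ⟨orthPart s l₀, fun m hm => ?_, fun R₁ hR₁ R₂ hR₂ heq => ?_⟩
  · rw [real_inner_comm]
    exact (Submodule.mem_orthogonal' _ _).1 (orthPart_mem_orthogonal s l₀) m hm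
  have hval : ∀ R, IsRayFace s R → ⟪rayPoint s R, orthPart s l₀⟫ = ⟪rayPoint s R, l₀⟫ :=
    fun R hR => by
      rw [orthPart, inner_sub_right, real_inner_comm ((perpSub s).starProjection l₀),
        (Submodule.mem_orthogonal _ _).1 hR.rayPoint_mem.1.2 _
          (starProjection_mem_perpSet s l₀), sub_zero]
  refine rayPoint_injOn hR₁ hR₂ (hl₀ ?_ ?_ ((hval R₁ hR₁).symm.trans (heq.trans (hval R₂ hR₂))))
  · exact Finset.mem_coe.2 (Finset.mem_image_of_mem _ (mem_rayFaces.2 hR₁))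
  · exact Finset.mem_coe.2 (Finset.mem_image_of_mem _ (mem_rayFaces.2 hR₂))

end Rays

section Morse

variable [FiniteDimensional ℝ E] {s : Finset E} {F R : Set E} {l : E}

/-- `⟪v, rayLevel s l R⟫ ≥ 0` says that `⟪v, l⟫ / ⟪v, constraintSum s⟫` is at least its value on
the ray `R`. -/
def rayLevel (s : Finset E) (l : E) (R : Set E) : E := l - ⟪rayPoint s R, l⟫ • constraintSum s

lemma IsRayFace.subset_hyperplane_rayLevel (hR : IsRayFace s R)
    (hl : ∀ m ∈ perpSet s, ⟪m, l⟫ = 0) : R ⊆ hyperplane (rayLevel s l R) := by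
  intro v hv
  by_cases hvL : v ∈ perpSet s
  · exact inner_sub_smul_of_mem_perpSet hl hvL _
  obtain ⟨u, hu, -, hvl⟩ := hR.isFaceOf.exists_base_inner_eq hv hvL hl
  rw [hR.eq_rayPoint hu] at hvl
  simp only [rayLevel, hyperplane, Set.mem_ofPred_eq, inner_sub_right, real_inner_smul_right, hvl]
  ring

variable (hl : ∀ m ∈ perpSet s, ⟪m, l⟫ = 0)
  (hinj : Set.InjOn (fun R => ⟪rayPoint s R, l⟫) {R | IsRayFace s R})
include hl hinj

/-- The minimum of `l` on the base of `F` is attained on a single ray, since `l` separates the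
ray points. -/
lemma existsUnique_isRayFace_inter_hyperplane (hF : IsFaceOf F (polyCone s))
    (hLF : perpSet s ⊂ F) : ∃! R, IsRayFace s R ∧ F ⊆ halfspace (rayLevel s l R) ∧
      F ∩ hyperplane (rayLevel s l R) = R := by
  obtain ⟨u, hu, hmin, hFl⟩ := hF.exists_subset_halfspace hLF.not_subset hl
  set X := F ∩ hyperplane (l - ⟪u, l⟫ • constraintSum s)
  have hX : IsFaceOf X (polyCone s) := hF.inter_hyperplane hFl
  have hLX : perpSet s ⊂ X := hF.perpSet_ssubset_inter_hyperplane hl hu rfl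
  have hlevel : ∀ R, IsRayFace s R → R ⊆ X → ⟪rayPoint s R, l⟫ = ⟪u, l⟫ := fun R hR hRX => by
    have h := (hRX hR.rayPoint_mem.1.1).2
    rw [hyperplane, Set.mem_ofPred_eq, inner_sub_smul_of_mem_base hR.rayPoint_mem] at h
    linarith
  obtain ⟨R, hR, hRX⟩ := exists_isRayFace_subset hX hLX
  have hRX' : R = X := by
    by_contra hne
    obtain ⟨R', hR', hR'X, hR'R⟩ :=
      hR.exists_ne_of_ssubset hX (Set.ssubset_iff_subset_ne.2 ⟨hRX, hne⟩)
    exact hR'R (hinj hR' hR ((hlevel R' hR' hR'X).trans (hlevel R hR hRX).symm))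
  have hRl : rayLevel s l R = l - ⟪u, l⟫ • constraintSum s := by rw [rayLevel, hlevel R hR hRX]
  refine ⟨R, ⟨hR, hRl ▸ hFl, hRl ▸ hRX'.symm⟩, fun R' ⟨hR', hFR', hcut'⟩ => ?_⟩
  have hp : rayPoint s R' ∈ base s F := base_mono (hcut' ▸ Set.inter_subset_left) hR'.rayPoint_mem
  have h₁ := hmin _ hp
  have h₂ : 0 ≤ ⟪u, rayLevel s l R'⟫ := hFR' hu.1.1
  rw [rayLevel, inner_sub_smul_of_mem_base hu] at h₂
  have hR'l : rayLevel s l R' = l - ⟪u, l⟫ • constraintSum s := by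
    rw [rayLevel, le_antisymm (by linarith) h₁]
  rw [← hcut', hR'l, hRX']

lemma eulerChar_eq_sum_rayFaces :
    eulerChar s = (-1 : ℝ) ^ sdim (perpSet s) +
      ∑ R ∈ rayFaces s, eulerCharAbove (activeSet s R) (rayLevel s l R) := by
  set fiber := fun R => (faces s).filter fun F =>
    F ⊆ halfspace (rayLevel s l R) ∧ F ∩ hyperplane (rayLevel s l R) = R
  have hunion : (faces s).erase (perpSet s) = (rayFaces s).biUnion fiber := by
    ext F
    simp only [Finset.mem_erase, Finset.mem_biUnion, mem_rayFaces, fiber, Finset.mem_filter,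
      ← isFaceOf_iff_mem_faces]
    refine ⟨fun ⟨hne, hF⟩ => ?_, fun ⟨R, hR, hF, _, hcut⟩ => ⟨fun h => ?_, hF⟩⟩
    · obtain ⟨R, ⟨hR, hFR⟩, -⟩ := existsUnique_isRayFace_inter_hyperplane hl hinj hF
        (Set.ssubset_iff_subset_ne.2 ⟨hF.perpSet_subset, Ne.symm hne⟩)
      exact ⟨R, hR, hF, hFR⟩
    · exact hR.perpSet_ssubset.not_subset (h ▸ hcut ▸ Set.inter_subset_left)
  have hdisj : (rayFaces s : Set (Set E)).PairwiseDisjoint fiber := by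
    intro R₁ hR₁ R₂ hR₂ hne
    refine Finset.disjoint_left.2 fun F hF₁ hF₂ => hne ?_
    obtain ⟨hF, h₁⟩ := Finset.mem_filter.1 hF₁
    obtain ⟨-, h₂⟩ := Finset.mem_filter.1 hF₂
    have hR₁ := mem_rayFaces.1 hR₁
    have hLF : perpSet s ⊂ F := hR₁.perpSet_ssubset.trans_subset (h₁.2 ▸ Set.inter_subset_left)
    exact (existsUnique_isRayFace_inter_hyperplane hl hinj (isFaceOf_iff_mem_faces.2 hF) hLF).unique
      ⟨hR₁, h₁⟩ ⟨mem_rayFaces.1 hR₂, h₂⟩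
  rw [eulerChar, ← Finset.add_sum_erase _ _ (isFaceOf_iff_mem_faces.1 (isFaceOf_perpSet s)),
    hunion, Finset.sum_biUnion hdisj]
  congr 1
  refine Finset.sum_congr rfl fun R hR => ?_
  have hR := mem_rayFaces.1 hR
  exact sum_faces_inter_hyperplane_eq hR.isFaceOf (hR.subset_hyperplane_rayLevel hl)

end Morse

section Vanishing

variable [FiniteDimensional ℝ E] {s : Finset E} {H : Set E} {l g : E}

lemma exists_isRayFace_inner_rayLevel_nonpos (hne : polyCone s ≠ perpSet s)
    (hl : ∀ m ∈ perpSet s, ⟪m, l⟫ = 0) :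
    ∃ R, IsRayFace s R ∧ ∀ v ∈ polyCone s, ⟪v, rayLevel s l R⟫ ≤ 0 := by
  have hC := isFaceOf_polyCone_self s
  have hl' : ∀ m ∈ perpSet s, ⟪m, -l⟫ = 0 := fun m hm => by rw [inner_neg_right, hl m hm, neg_zero]
  obtain ⟨u, hu, -, hCu⟩ :=
    hC.exists_subset_halfspace (fun h => hne (h.antisymm perpSet_subset_polyCone)) hl'
  obtain ⟨R, hR, hRX⟩ := exists_isRayFace_subset (hC.inter_hyperplane hCu)
    (hC.perpSet_ssubset_inter_hyperplane hl' hu rfl)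
  have hRu : ⟪rayPoint s R, l⟫ = ⟪u, l⟫ := by
    have h := (hRX hR.rayPoint_mem.1.1).2
    rw [hyperplane, Set.mem_ofPred_eq, inner_sub_smul_of_mem_base hR.rayPoint_mem, inner_neg_right,
      inner_neg_right] at h
    linarith
  refine ⟨R, hR, fun v hv => ?_⟩
  have h : 0 ≤ ⟪v, -l - ⟪u, -l⟫ • constraintSum s⟫ := hCu hv
  simp only [rayLevel, hRu, inner_sub_right, inner_neg_right, real_inner_smul_right] at h ⊢
  linarith

/-- The Morse-type count: choosing `l` generic, every face other than the lineality space is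
attributed to the ray at which `l / constraintSum s` is minimal on it, and the tangent cones at all
rays but the one maximizing this ratio contribute nothing. -/
lemma eulerChar_eq_zero_of_tangent (hne : polyCone s ≠ perpSet s)
    (ih : ∀ H, IsFaceOf H (polyCone s) → perpSet s ⊂ H → ∀ g,
      (∃ p ∈ polyCone (activeSet s H), 0 < ⟪p, g⟫) → eulerCharAbove (activeSet s H) g = 0) :
    eulerChar s = 0 := by
  obtain ⟨l, hl, hinj⟩ := exists_inner_injOn_rayPoint s
  obtain ⟨Rm, hRm, hRmC⟩ := exists_isRayFace_inner_rayLevel_nonpos hne hl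
  have hterm : ∀ R ∈ rayFaces s, eulerCharAbove (activeSet s R) (rayLevel s l R) =
      if R = Rm then (-1 : ℝ) ^ (sdim (perpSet s) + 1) else 0 := by
    intro R hR
    have hR := mem_rayFaces.1 hR
    have hRg := hR.subset_hyperplane_rayLevel hl
    by_cases hpos : ∃ p ∈ polyCone (activeSet s R), 0 < ⟪p, rayLevel s l R⟫
    · have hRm' : R ≠ Rm := by
        rintro rfl
        obtain ⟨p, hp, hp0⟩ := hpos
        exact (hR.isFaceOf.inner_nonpos_of_mem_tangent hRg hRmC hp).not_gt hp0
      rw [if_neg hRm', ih R hR.isFaceOf hR.perpSet_ssubset _ hpos]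
    push Not at hpos
    have hle : ⟪rayPoint s R, l⟫ ≤ ⟪rayPoint s Rm, l⟫ := by
      have h := hRmC _ (hR.isFaceOf.subset hR.rayPoint_mem.1.1)
      rw [rayLevel, inner_sub_smul_of_mem_base hR.rayPoint_mem] at h
      linarith
    have hge : ⟪rayPoint s Rm, l⟫ ≤ ⟪rayPoint s R, l⟫ := by
      have h := hpos _ (polyCone_anti (activeSet_subset s R)
        (hRm.isFaceOf.subset hRm.rayPoint_mem.1.1))
      rw [rayLevel, inner_sub_smul_of_mem_base hRm.rayPoint_mem] at h
      linarith
    rw [if_pos (hinj hR hRm (le_antisymm hle hge)), eulerCharAbove_eq_of_inner_nonpos hpos,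
      sdim_perpSet, ← hR.isFaceOf.sdim_eq, hR.sdim_eq]
  rw [eulerChar_eq_sum_rayFaces hl hinj, Finset.sum_congr rfl hterm, Finset.sum_ite_eq',
    if_pos (mem_rayFaces.2 hRm), pow_succ]
  ring

def excessDim (s : Finset E) : ℕ :=
  Module.finrank ℝ (Submodule.span ℝ (polyCone s)) - Module.finrank ℝ (perpSub s)

lemma excessDim_activeSet_lt (hH : IsFaceOf H (polyCone s)) (hLH : perpSet s ⊂ H) :
    excessDim (activeSet s H) < excessDim s := by
  have h₁ := Submodule.finrank_mono hH.span_tangent_le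
  have h₂ := Submodule.finrank_mono (perpSub_le_span (activeSet s H))
  have h₃ := Submodule.finrank_mono (perpSub_le_span s)
  have h₄ := sdim_lt_sdim_of_ssubset hH (isFaceOf_perpSet s) hLH
  rw [hH.sdim_eq, sdim_perpSet] at h₄
  unfold excessDim
  omega

lemma excessDim_insert_le (hsub : perpSet s ⊆ hyperplane g) :
    excessDim (insert g s) ≤ excessDim s := by
  have h₁ := Submodule.finrank_mono
    (Submodule.span_mono (R := ℝ) (polyCone_anti (Finset.subset_insert g s)))
  have h₂ : perpSub (insert g s) = perpSub s := SetLike.coe_injective (perpSet_insert hsub)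
  unfold excessDim
  rw [h₂]
  omega

theorem eulerChar_eq_zero_and_eulerCharAbove_eq_zero (s : Finset E) :
    (polyCone s ≠ perpSet s → eulerChar s = 0) ∧
      ∀ g, (∃ q ∈ polyCone s, 0 < ⟪q, g⟫) → eulerCharAbove s g = 0 := by
  induction hn : excessDim s using Nat.strong_induction_on generalizing s with
  | _ n ih =>
  have htangent : ∀ s', excessDim s' ≤ n → ∀ H, IsFaceOf H (polyCone s') → perpSet s' ⊂ H →
      ∀ g, (∃ p ∈ polyCone (activeSet s' H), 0 < ⟪p, g⟫) → eulerCharAbove (activeSet s' H) g = 0 :=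
    fun s' hs' H hH hLH => (ih _ ((excessDim_activeSet_lt hH hLH).trans_le hs') _ rfl).2
  have hχ : ∀ s', excessDim s' ≤ n → polyCone s' ≠ perpSet s' → eulerChar s' = 0 :=
    fun s' hs' hne => eulerChar_eq_zero_of_tangent hne (htangent s' hs')
  refine ⟨hχ s hn.le, fun g hq => ?_⟩
  by_cases hsub : perpSet s ⊆ hyperplane g
  · have hs' := (excessDim_insert_le hsub).trans hn.le
    exact eulerCharAbove_eq_zero_of_insert hsub hq (hχ _ hs') (htangent _ hs')
  · exact eulerCharAbove_eq_zero_of_not_subset hsub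

theorem eulerChar_eq_zero (hne : polyCone s ≠ perpSet s) : eulerChar s = 0 :=
  (eulerChar_eq_zero_and_eulerCharAbove_eq_zero s).1 hne

theorem eulerCharAbove_eq_zero (hq : ∃ q ∈ polyCone s, 0 < ⟪q, g⟫) : eulerCharAbove s g = 0 :=
  (eulerChar_eq_zero_and_eulerCharAbove_eq_zero s).2 g hq

theorem sum_faces_subset_halfspace_eq_zero
    (hy : ¬ ((∀ c ∈ polyCone s, ⟪c, g⟫ ≤ 0) ∧ polyCone s ∩ hyperplane g = perpSet s)) :
    ∑ F ∈ (faces s).filter (· ⊆ halfspace g), (-1 : ℝ) ^ sdim F = 0 := by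
  by_cases hpos : ∃ c ∈ polyCone s, 0 < ⟪c, g⟫
  · obtain ⟨c, hc, hcg⟩ := hpos
    rw [sum_faces_subset_halfspace]
    exact Finset.sum_eq_zero fun H _ =>
      eulerCharAbove_eq_zero ⟨c, polyCone_anti (activeSet_subset s H) hc, hcg⟩
  push Not at hpos
  have hcut : polyCone (insert g s) = polyCone s ∩ hyperplane g := by
    rw [polyCone_insert]
    exact Set.inter_congr_left (fun v hv => hv.2.ge) fun v hv => le_antisymm (hpos v hv.1) hv.2
  rw [filter_faces_subset_halfspace hpos]
  refine eulerChar_eq_zero ?_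
  rw [hcut, perpSet_insert (perpSet_subset_hyperplane_of_inner_nonpos hpos)]
  exact fun h => hy ⟨hpos, h⟩

end Vanishing

section IntrinsicInterior

variable {P : Type*} [NormedAddCommGroup P] [NormedSpace ℝ P] {S : Set P} {z u : P}

lemma exists_add_smul_sub_mem_of_mem_intrinsicInterior (hz : z ∈ intrinsicInterior ℝ S)
    (hu : u ∈ S) : ∃ ε : ℝ, 0 < ε ∧ z + ε • (z - u) ∈ S := by
  obtain ⟨y, hy, rfl⟩ := mem_intrinsicInterior.1 hz
  have hmem : ∀ ε : ℝ, (y : P) + ε • ((y : P) - u) ∈ affineSpan ℝ S := fun ε => by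
    simpa [vsub_eq_sub, vadd_eq_add, add_comm] using
      AffineSubspace.smul_vsub_vadd_mem (affineSpan ℝ S) ε y.2 (subset_affineSpan ℝ S hu) y.2
  let f : ℝ → affineSpan ℝ S := fun ε => ⟨y + ε • (y - u), hmem ε⟩
  have hf : Continuous f := by fun_prop
  have hf0 : f 0 = y := Subtype.ext (by simp [f])
  have hev : ∀ᶠ ε in 𝓝 (0 : ℝ), f ε ∈ (↑) ⁻¹' S :=
    hf.continuousAt.preimage_mem_nhds (hf0 ▸ mem_interior_iff_mem_nhds.1 hy)
  obtain ⟨ε, hε, hεS⟩ := (hev.filter_mono nhdsWithin_le_nhds |>.and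
    (self_mem_nhdsWithin (s := Set.Ioi 0))).exists
  exact ⟨ε, hεS, hε⟩

lemma mem_intrinsicInterior_of_forall_add_mem {δ : ℝ} (hδ : 0 < δ) (hz : z ∈ S)
    (h : ∀ w ∈ (affineSpan ℝ S).direction, ‖w‖ < δ → z + w ∈ S) :
    z ∈ intrinsicInterior ℝ S := by
  let z' : affineSpan ℝ S := ⟨z, subset_affineSpan ℝ S hz⟩
  refine mem_intrinsicInterior.2 ⟨z', mem_interior.2 ⟨Metric.ball z' δ, fun y hy => ?_,
    Metric.isOpen_ball, Metric.mem_ball_self hδ⟩, rfl⟩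
  have hdir : (y : P) - z ∈ (affineSpan ℝ S).direction :=
    AffineSubspace.vsub_mem_direction y.2 z'.2
  have hnorm : ‖(y : P) - z‖ < δ := by
    rwa [Metric.mem_ball, Subtype.dist_eq, dist_eq_norm] at hy
  simpa using h _ hdir hnorm

lemma direction_affineSpan_of_zero_mem (h0 : (0 : P) ∈ S) :
    (affineSpan ℝ S).direction = Submodule.span ℝ S := by
  rw [direction_affineSpan, vectorSpan_eq_span_vsub_set_right ℝ h0]
  simp

end IntrinsicInterior

section DualCone

variable {s : Finset E} {F : Set E} {v y : E}

lemma mem_dualCone_iff_subset_halfspace : v ∈ dualCone F ↔ F ⊆ halfspace v := by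
  simp only [dualCone, halfspace, Set.subset_def, Set.mem_ofPred_eq, real_inner_comm]

lemma mem_orthogonal_of_mem_dualCone (hv : v ∈ dualCone (polyCone s)) : v ∈ (perpSub s)ᗮ := by
  refine (Submodule.mem_orthogonal _ _).2 fun m hm => ?_
  have h₁ := hv m (perpSet_subset_polyCone hm)
  have h₂ := hv (-m) (perpSet_subset_polyCone (neg_mem_perpSet hm))
  rw [inner_neg_right] at h₂
  rw [real_inner_comm]
  linarith

lemma inner_nonpos_and_inter_hyperplane_eq_of_neg_mem
    (hy : -y ∈ intrinsicInterior ℝ (dualCone (polyCone s))) :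
    (∀ c ∈ polyCone s, ⟪c, y⟫ ≤ 0) ∧ polyCone s ∩ hyperplane y = perpSet s := by
  have hnonpos : ∀ c ∈ polyCone s, ⟪c, y⟫ ≤ 0 := fun c hc => by
    have h := intrinsicInterior_subset hy c hc
    rwa [inner_neg_left, real_inner_comm, neg_nonneg] at h
  refine ⟨hnonpos, subset_antisymm (fun c ⟨hc, hcy⟩ => ?_) fun m hm =>
    ⟨perpSet_subset_polyCone hm, perpSet_subset_hyperplane_of_inner_nonpos hnonpos hm⟩⟩
  by_contra hcL
  obtain ⟨t, ht, hct⟩ : ∃ t ∈ s, 0 < ⟪c, t⟫ := by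
    by_contra! h
    exact hcL fun t ht => le_antisymm (h t ht) (hc t ht)
  obtain ⟨ε, hε, hmem⟩ := exists_add_smul_sub_mem_of_mem_intrinsicInterior hy
    (u := t) fun c hc => by rw [real_inner_comm]; exact hc t ht
  have h := hmem c hc
  rw [inner_add_left, real_inner_smul_left, inner_sub_left, inner_neg_left, real_inner_comm c y,
    real_inner_comm c t, show ⟪c, y⟫ = 0 from hcy] at h
  nlinarith

variable [FiniteDimensional ℝ E]

lemma neg_mem_intrinsicInterior_dualCone (hnonpos : ∀ c ∈ polyCone s, ⟪c, y⟫ ≤ 0)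
    (hcut : polyCone s ∩ hyperplane y = perpSet s) :
    -y ∈ intrinsicInterior ℝ (dualCone (polyCone s)) := by
  have hmem : -y ∈ dualCone (polyCone s) := fun c hc => by
    rw [inner_neg_left, real_inner_comm, neg_nonneg]
    exact hnonpos c hc
  obtain ⟨m, hm, hbound⟩ := exists_mul_norm_le_inner_of_polyCone (b := -y) fun v hv hvL hv0 => by
    rw [inner_neg_right, neg_pos]
    refine (hnonpos v hv).lt_of_ne fun h => hv0 (eq_zero_of_mem_perpSet_of_mem_orthogonal ?_ hvL)
    rw [← hcut]
    exact ⟨hv, h⟩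
  refine mem_intrinsicInterior_of_forall_add_mem hm hmem fun w hw hwm c hc => ?_
  rw [direction_affineSpan_of_zero_mem fun c _ => by simp] at hw
  have hwL : w ∈ (perpSub s)ᗮ :=
    Submodule.span_le.2 (fun v hv => mem_orthogonal_of_mem_dualCone hv) hw
  have hyL : ∀ m ∈ perpSet s, ⟪m, -y + w⟫ = 0 := fun m' hm' => by
    rw [inner_add_right, real_inner_comm (-y), real_inner_comm w,
      (Submodule.mem_orthogonal' _ _).1 (mem_orthogonal_of_mem_dualCone hmem) m' hm',
      (Submodule.mem_orthogonal' _ _).1 hwL m' hm', add_zero]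
  -- only the component of `c` orthogonal to the lineality space matters
  rw [real_inner_comm c, ← inner_orthPart hyL, inner_add_right]
  have h₁ := hbound _ ((isFaceOf_polyCone_self s).orthPart_mem hc) (orthPart_mem_orthogonal s c)
  have h₂ : -(‖w‖ * ‖orthPart s c‖) ≤ ⟪orthPart s c, w⟫ := by
    have := real_inner_le_norm (orthPart s c) (-w)
    rw [inner_neg_right, norm_neg] at this
    linarith
  nlinarith [norm_nonneg (orthPart s c)]

lemma neg_mem_intrinsicInterior_dualCone_iff :
    -y ∈ intrinsicInterior ℝ (dualCone (polyCone s)) ↔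
      (∀ c ∈ polyCone s, ⟪c, y⟫ ≤ 0) ∧ polyCone s ∩ hyperplane y = perpSet s :=
  ⟨inner_nonpos_and_inter_hyperplane_eq_of_neg_mem,
    fun h => neg_mem_intrinsicInterior_dualCone h.1 h.2⟩

end DualCone

section Gamma

variable {s : Finset E} {C F F₀ : Set E} {x y : E}

lemma ind_of_mem {α : Type*} {S : Set α} {a : α} (h : a ∈ S) : ind S a = 1 :=
  Set.indicator_of_mem h _

lemma ind_of_notMem {α : Type*} {S : Set α} {a : α} (h : a ∉ S) : ind S a = 0 :=
  Set.indicator_of_notMem h _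

lemma IsPolyCone.exists_eq_polyCone (hC : IsPolyCone C) : ∃ s : Finset E, C = polyCone s := by
  obtain ⟨s, rfl⟩ := hC
  exact ⟨s, by ext; simp [polyCone]⟩

lemma IsMinimalFace.eq_perpSet (h₀ : IsMinimalFace F₀ (polyCone s)) : F₀ = perpSet s :=
  (h₀.2 _ (isFaceOf_perpSet s)).antisymm h₀.1.perpSet_subset

lemma Γ_polyCone (s : Finset E) (x y : E) :
    Γ (polyCone s) x y = ∑ F ∈ faces s,
      (-1 : ℝ) ^ sdim F * ind (angleCone F (polyCone s)) x * ind (dualCone F) y := by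
  rw [Γ, show {F | IsFaceOf F (polyCone s)} = ↑(faces s) from
    Set.ext fun _ => isFaceOf_iff_mem_faces]
  exact finsum_mem_coe_finset _ _

variable [FiniteDimensional ℝ E]

lemma IsFaceOf.mem_angleCone (hF : IsFaceOf F (polyCone s)) (hx : x ∈ polyCone s) :
    x ∈ angleCone F (polyCone s) := by
  obtain ⟨z, hz⟩ := Set.Nonempty.intrinsicInterior
    (fun _ hv _ hw _ _ ha hb _ => hF.add_mem (hF.smul_mem ha hv) (hF.smul_mem hb hw))
    ⟨0, hF.zero_mem⟩
  exact ⟨1, one_pos, x + z, add_mem_polyCone hx (hF.subset (intrinsicInterior_subset hz)), z, hz,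
    by rw [one_smul, add_sub_cancel_right]⟩

lemma angleCone_perpSet (s : Finset E) : angleCone (perpSet s) (polyCone s) = polyCone s := by
  refine subset_antisymm ?_ fun x hx => (isFaceOf_perpSet s).mem_angleCone hx
  rintro _ ⟨a, ha, x, hx, z, hz, rfl⟩
  rw [smul_sub, sub_eq_add_neg]
  exact add_mem_polyCone (smul_mem_polyCone ha.le hx) (perpSet_subset_polyCone
    (neg_mem_perpSet ((perpSub s).smul_mem a (intrinsicInterior_subset hz))))

/-- For `-y` in the relative interior of the dual cone, only the lineality space has `y` in its
dual cone. -/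
lemma Γ_polyCone_of_neg_mem (hy : -y ∈ intrinsicInterior ℝ (dualCone (polyCone s))) :
    Γ (polyCone s) x y = (-1 : ℝ) ^ sdim (perpSet s) * ind (polyCone s) x := by
  obtain ⟨hnonpos, hcut⟩ := neg_mem_intrinsicInterior_dualCone_iff.1 hy
  have hL := perpSet_subset_hyperplane_of_inner_nonpos hnonpos
  rw [Γ_polyCone, Finset.sum_eq_single_of_mem _ (isFaceOf_iff_mem_faces.1 (isFaceOf_perpSet s)),
    angleCone_perpSet, ind_of_mem (mem_dualCone_iff_subset_halfspace.2 fun v hv => (hL hv).ge),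
    mul_one]
  intro F hF hFL
  have hF := isFaceOf_iff_mem_faces.2 hF
  refine mul_eq_zero_of_right _ (ind_of_notMem fun hyF => hFL ?_)
  refine subset_antisymm (fun v hv => ?_) hF.perpSet_subset
  rw [← hcut]
  exact ⟨hF.subset hv, le_antisymm (hnonpos v (hF.subset hv))
    (mem_dualCone_iff_subset_halfspace.1 hyF hv)⟩

/-- For `x ∈ C` every angle cone contains `x`, so `Γ` counts the faces in `halfspace y`. -/
lemma Γ_polyCone_eq_zero (hx : x ∈ polyCone s)
    (hy : -y ∉ intrinsicInterior ℝ (dualCone (polyCone s))) : Γ (polyCone s) x y = 0 := by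
  rw [Γ_polyCone, ← sum_faces_subset_halfspace_eq_zero
    (neg_mem_intrinsicInterior_dualCone_iff.not.1 hy), Finset.sum_filter]
  refine Finset.sum_congr rfl fun F hF => ?_
  have hF := isFaceOf_iff_mem_faces.2 hF
  rw [ind_of_mem (hF.mem_angleCone hx), mul_one]
  split_ifs with hFy
  · rw [ind_of_mem (mem_dualCone_iff_subset_halfspace.2 hFy), mul_one]
  · rw [ind_of_notMem (mt mem_dualCone_iff_subset_halfspace.1 hFy), mul_zero]

end Gamma

theorem stmt11 (C F₀ : Set V) (hC : IsPolyCone C) (h₀ : IsMinimalFace F₀ C) (x y : V)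
    (h : y ∈ -(intrinsicInterior ℝ (dualCone C)) ∨ x ∈ C) :
    Γ C x y = (-1 : ℝ) ^ sdim F₀ * ind C x * ind (-(intrinsicInterior ℝ (dualCone C))) y := by
  obtain ⟨s, rfl⟩ := hC.exists_eq_polyCone
  rw [h₀.eq_perpSet]
  by_cases hy : y ∈ -(intrinsicInterior ℝ (dualCone (polyCone s)))
  · rw [Γ_polyCone_of_neg_mem hy, ind_of_mem hy, mul_one]
  · rw [Γ_polyCone_eq_zero (h.resolve_left hy) hy, ind_of_notMem hy, mul_zero]
end
end

section
/- Γ(C,x,y) = Σ_{F face of C} (-1)^{dim F} [A(F,C)](x)[F*](y) vanishes unless x ∈ span(C) and y ∈ F₀^⊥, where F₀ is the minimal face of C. -/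
open scoped RealInnerProductSpace
open scoped Classical

noncomputable section

variable {V : Type*} [NormedAddCommGroup V] [InnerProductSpace ℝ V] [FiniteDimensional ℝ V]

lemma minFace_neg_mem {C F₀ : Set V} (hC : IsPolyCone C) (h₀ : IsMinimalFace F₀ C)
    {w : V} (hw : w ∈ F₀) : -w ∈ C := by
  obtain ⟨s, rfl⟩ := hC
  have memC : ∀ v : V, (v ∈ ⋂ y ∈ s, {v : V | 0 ≤ ⟪v, y⟫}) ↔ ∀ u ∈ s, 0 ≤ ⟪v, u⟫ := by
    intro v; simp [Set.mem_iInter₂]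
  have hface : IsFaceOf ((⋂ y ∈ s, {v : V | 0 ≤ ⟪v, y⟫}) ∩ {v : V | ⟪v, ∑ u ∈ s, u⟫ = 0})
      (⋂ y ∈ s, {v : V | 0 ≤ ⟪v, y⟫}) := by
    refine ⟨∑ u ∈ s, u, fun v hv => ?_, rfl⟩
    rw [Set.mem_setOf_eq, inner_sum]
    exact Finset.sum_nonneg fun u hu => (memC v).1 hv u hu
  have hw' := h₀.2 _ hface hw
  have hw0 : ∀ u ∈ s, ⟪w, u⟫ = 0 := by
    have hsum : ∑ u ∈ s, ⟪w, u⟫ = 0 := by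
      have := hw'.2; rwa [Set.mem_setOf_eq, inner_sum] at this
    exact (Finset.sum_eq_zero_iff_of_nonneg fun u hu => (memC w).1 hw'.1 u hu).1 hsum
  exact (memC (-w)).2 fun u hu => by rw [inner_neg_left, hw0 u hu, neg_zero]

theorem stmt13 (C F₀ : Set V) (hC : IsPolyCone C) (h₀ : IsMinimalFace F₀ C) (x y : V)
    (h : ¬ (x ∈ (Submodule.span ℝ C : Set V) ∧ y ∈ {v : V | ∀ w ∈ F₀, ⟪v, w⟫ = 0})) :
    Γ C x y = 0 := by
  rw [not_and_or] at h
  apply finsum_mem_of_eqOn_zero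
  intro F hF
  have hFC : F ⊆ C := by obtain ⟨yF, -, rfl⟩ := hF; exact Set.inter_subset_left
  rcases h with hx | hy
  · have hxa : x ∉ angleCone F C := by
      rintro ⟨a, ha, x', hx', z, hz, rfl⟩
      exact hx (Submodule.smul_mem _ _ (Submodule.sub_mem _ (Submodule.subset_span hx')
        (Submodule.subset_span (hFC (intrinsicInterior_subset hz)))))
    simp [ind, Set.indicator_of_notMem hxa]
  · rw [Set.mem_setOf_eq] at hy
    push_neg at hy
    obtain ⟨w, hwF₀, hwy⟩ := hy
    have hwF : w ∈ F := h₀.2 F hF hwF₀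
    have hnwF : -w ∈ F := by
      obtain ⟨yF, hsub, rfl⟩ := hF
      refine ⟨minFace_neg_mem ⟨hC.choose, hC.choose_spec⟩ h₀ hwF₀, ?_⟩
      rw [Set.mem_setOf_eq, inner_neg_left, hwF.2, neg_zero]
    have hyd : y ∉ dualCone F := by
      intro hy'
      have h1 := hy' w hwF
      have h2 := hy' (-w) hnwF
      rw [inner_neg_right] at h2
      exact hwy (le_antisymm (by linarith) h1)
    simp [ind, Set.indicator_of_notMem hyd]
end
end
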